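/- arXiv:2406.04241 — 7 statements merged into one kernel-verified Lean document; each statement's English description precedes it below -/
import Mathlib

section
/- Let (E, E₊, θ) be a reflection positive Hilbert space. Then the following are equivalent: (a) (E, E₊, θ) is a maximal reflection positive Hilbert space; (b) there exists a subspace V of E^θ which is dense in E^θ and satisfies V ⊆ E₊ + E^{−θ}; (c) E^θ ⊆ E₊ + E^{−θ}. -/
open MeasureTheory

/-- A triple `(E, E₊, θ)` of a Hilbert space, a (closed) subspace and a unitary involution
is a reflection positive Hilbert space if `⟨ξ, θξ⟩ ≥ 0` for all `ξ ∈ E₊`.  Here we encode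
the reflection positivity condition for an arbitrary subspace `V`. -/
def IsReflectionPositiveOn {𝕜 E : Type*} [RCLike 𝕜] [NormedAddCommGroup E]
    [InnerProductSpace 𝕜 E] (θ : E ≃ₗᵢ[𝕜] E) (V : Submodule 𝕜 E) : Prop :=
  ∀ ξ ∈ V, 0 ≤ RCLike.re (inner 𝕜 ξ (θ ξ) : 𝕜) ∧ RCLike.im (inner 𝕜 ξ (θ ξ) : 𝕜) = 0

/-!
Let `p = (1 + θ) / 2`. Reflection positivity of `ξ` says `‖ξ - θ ξ‖ ≤ ‖ξ + θ ξ‖`, hence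
`‖ξ‖ ≤ 2 ‖p ξ‖`: on a reflection positive subspace a vector is controlled by its even part.
A `θ`-fixed vector lies in `E₊ + E^{-θ}` iff it lies in `p(E₊)`, so (c) says `p(E₊) = E^θ`
and (b) says `p(E₊)` is dense in `E^θ`.

(b) ⇒ (a): for `ξ` in a larger reflection positive `E₊'`, pick `a ∈ E₊` with `p a` close to
`p ξ`; then `ξ - a ∈ E₊'` is small, so `ξ ∈ closure E₊ = E₊`.

(a) ⇒ (c): the domination makes `p(E₊)` closed. A fixed vector `z` orthogonal to `p(E₊)`
is orthogonal to `E₊` (as `⟪p a, z⟫ = ⟪a, z⟫`), and `E₊ + 𝕜 z` is still reflection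
positive since the cross terms vanish; maximality forces `z = 0`.
-/

open scoped InnerProductSpace

section

variable {𝕜 E : Type*} [RCLike 𝕜] [NormedAddCommGroup E] [InnerProductSpace 𝕜 E]

namespace LinearIsometryEquiv

variable (θ : E ≃ₗᵢ[𝕜] E)

def fixedSubmodule : Submodule 𝕜 E :=
  LinearMap.eqLocus (θ : E →ₗ[𝕜] E) LinearMap.id

@[simp]
lemma mem_fixedSubmodule {v : E} : v ∈ θ.fixedSubmodule ↔ θ v = v := Iff.rfl

/-- `(1 + θ) / 2`, the orthogonal projection onto `E^θ` when `θ` is an involution. -/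
noncomputable def evenPart : E →L[𝕜] E :=
  (2 : 𝕜)⁻¹ • (ContinuousLinearMap.id 𝕜 E + θ.toContinuousLinearEquiv.toContinuousLinearMap)

lemma evenPart_apply (ξ : E) : θ.evenPart ξ = (2 : 𝕜)⁻¹ • (ξ + θ ξ) := rfl

variable {θ}

lemma evenPart_of_apply_eq_self {v : E} (hv : θ v = v) : θ.evenPart v = v := by
  rw [evenPart_apply, hv, ← two_smul 𝕜, smul_smul, inv_mul_cancel₀ two_ne_zero, one_smul]

lemma evenPart_of_apply_eq_neg {b : E} (hb : θ b = -b) : θ.evenPart b = 0 := by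
  rw [evenPart_apply, hb, add_neg_cancel, smul_zero]

lemma apply_evenPart (hθ : Function.Involutive θ) (ξ : E) :
    θ (θ.evenPart ξ) = θ.evenPart ξ := by
  rw [evenPart_apply, map_smul, map_add, hθ, add_comm]

lemma apply_evenPart_sub_self (hθ : Function.Involutive θ) (ξ : E) :
    θ (θ.evenPart ξ - ξ) = -(θ.evenPart ξ - ξ) := by
  rw [map_sub, apply_evenPart hθ, evenPart_apply, neg_sub, sub_eq_sub_iff_add_eq_add,
    ← two_smul 𝕜 (_ • _), smul_smul, mul_inv_cancel₀ two_ne_zero, one_smul, add_comm ξ]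

lemma inner_evenPart_left {z : E} (hz : θ z = z) (ξ : E) :
    ⟪θ.evenPart ξ, z⟫_𝕜 = ⟪ξ, z⟫_𝕜 := by
  conv_lhs => rw [evenPart_apply, ← hz, inner_smul_left, inner_add_left, θ.inner_map_map, hz]
  rw [← two_mul, ← mul_assoc, map_inv₀, map_ofNat, inv_mul_cancel₀ two_ne_zero, one_mul]

end LinearIsometryEquiv

namespace IsReflectionPositiveOn

variable {θ : E ≃ₗᵢ[𝕜] E} {V : Submodule 𝕜 E}

lemma norm_le_two_mul_norm_evenPart (hV : IsReflectionPositiveOn θ V) {ξ : E} (hξ : ξ ∈ V) :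
    ‖ξ‖ ≤ 2 * ‖θ.evenPart ξ‖ := by
  have hre := (hV ξ hξ).1
  have hodd : ‖ξ - θ ξ‖ ≤ ‖ξ + θ ξ‖ := by
    rw [← sq_le_sq₀ (norm_nonneg _) (norm_nonneg _), norm_sub_sq (𝕜 := 𝕜),
      norm_add_sq (𝕜 := 𝕜)]
    linarith
  have htwo : (2 : 𝕜) • ξ = (ξ + θ ξ) + (ξ - θ ξ) := by rw [two_smul]; abel
  have htri := norm_add_le (ξ + θ ξ) (ξ - θ ξ)
  rw [← htwo, norm_smul, RCLike.norm_two] at htri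
  rw [θ.evenPart_apply, norm_smul, norm_inv, RCLike.norm_two]
  linarith

lemma topologicalClosure (hV : IsReflectionPositiveOn θ V) :
    IsReflectionPositiveOn θ V.topologicalClosure := by
  have hcont : Continuous fun ξ : E => ⟪ξ, θ ξ⟫_𝕜 := by fun_prop
  have hclosed : IsClosed {ξ : E | 0 ≤ RCLike.re ⟪ξ, θ ξ⟫_𝕜 ∧ RCLike.im ⟪ξ, θ ξ⟫_𝕜 = 0} :=
    (isClosed_le continuous_const (RCLike.continuous_re.comp hcont)).inter
      (isClosed_eq (RCLike.continuous_im.comp hcont) continuous_const)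
  exact fun ξ hξ => closure_minimal (fun η hη => hV η hη) hclosed hξ

lemma sup_of_le_fixedSubmodule (hθ : Function.Involutive θ) (hV : IsReflectionPositiveOn θ V)
    {W : Submodule 𝕜 E} (hWfix : W ≤ θ.fixedSubmodule) (hWV : W ≤ Vᗮ) :
    IsReflectionPositiveOn θ (V ⊔ W) := by
  rintro _ hξ
  obtain ⟨v, hv, w, hw, rfl⟩ := Submodule.mem_sup.1 hξ
  have hθw : θ w = w := θ.mem_fixedSubmodule.1 (hWfix hw)
  have hvw : ⟪v, w⟫_𝕜 = 0 := Submodule.inner_right_of_mem_orthogonal hv (hWV hw)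
  have hwθv : ⟪w, θ v⟫_𝕜 = 0 := by
    rw [← θ.inner_map_map, hθ, hθw, inner_eq_zero_symm, hvw]
  have hexpand : ⟪v + w, θ (v + w)⟫_𝕜 = ⟪v, θ v⟫_𝕜 + ⟪w, w⟫_𝕜 := by
    rw [map_add, hθw, inner_add_left, inner_add_right, inner_add_right, hvw, hwθv]
    ring
  rw [hexpand, map_add, map_add, inner_self_im, add_zero]
  exact ⟨add_nonneg (hV v hv).1 inner_self_nonneg, (hV v hv).2⟩

lemma isClosed_map_evenPart [CompleteSpace V] (hV : IsReflectionPositiveOn θ V) :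
    IsClosed (V.map (θ.evenPart : E →ₗ[𝕜] E) : Set E) := by
  let f : V →L[𝕜] E := θ.evenPart.comp V.subtypeL
  have hf : AntilipschitzWith 2 f :=
    f.antilipschitz_of_bound fun ξ => hV.norm_le_two_mul_norm_evenPart ξ.2
  have hrange : Set.range f = V.map (θ.evenPart : E →ₗ[𝕜] E) := by
    ext; simp [f]
  exact hrange ▸ hf.isClosed_range f.uniformContinuous

end IsReflectionPositiveOn

def IsMaximalReflectionPositive (θ : E ≃ₗᵢ[𝕜] E) (Ep : Submodule 𝕜 E) : Prop :=
  ∀ Ep' : Submodule 𝕜 E, IsClosed (Ep' : Set E) → Ep ≤ Ep' →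
    IsReflectionPositiveOn θ Ep' → Ep' = Ep

variable {θ : E ≃ₗᵢ[𝕜] E} {Ep : Submodule 𝕜 E}

lemma mem_map_evenPart_iff (hθ : Function.Involutive θ) {v : E} (hv : θ v = v) :
    v ∈ Ep.map (θ.evenPart : E →ₗ[𝕜] E) ↔ ∃ a ∈ Ep, ∃ b : E, θ b = -b ∧ v = a + b := by
  constructor
  · rintro ⟨a, ha, rfl⟩
    exact ⟨a, ha, θ.evenPart a - a, θ.apply_evenPart_sub_self hθ a, (add_sub_cancel a _).symm⟩
  · rintro ⟨a, ha, b, hb, rfl⟩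
    refine ⟨a, ha, ?_⟩
    have hsplit := θ.evenPart.map_add a b
    rw [θ.evenPart_of_apply_eq_neg hb, add_zero, θ.evenPart_of_apply_eq_self hv] at hsplit
    exact hsplit.symm

lemma le_of_fixedSubmodule_subset_closure (hθ : Function.Involutive θ)
    (hEp : IsClosed (Ep : Set E)) {Ep' : Submodule 𝕜 E} (hRP' : IsReflectionPositiveOn θ Ep')
    (hle : Ep ≤ Ep')
    (hdense : (θ.fixedSubmodule : Set E) ⊆ closure (Ep.map (θ.evenPart : E →ₗ[𝕜] E))) :
    Ep' ≤ Ep := by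
  intro ξ hξ
  refine hEp.closure_subset (Metric.mem_closure_iff.2 ?_)
  intro ε hε
  obtain ⟨_, ⟨a, ha, rfl⟩, hdist⟩ := Metric.mem_closure_iff.1
    (hdense (θ.apply_evenPart hθ ξ)) (ε / 2) (half_pos hε)
  refine ⟨a, ha, ?_⟩
  have hbound := hRP'.norm_le_two_mul_norm_evenPart (Ep'.sub_mem hξ (hle ha))
  rw [map_sub, ← dist_eq_norm, ← dist_eq_norm] at hbound
  rw [ContinuousLinearMap.coe_coe] at hdist
  linarith

lemma IsMaximalReflectionPositive.eq_zero_of_mem_orthogonal (hθ : Function.Involutive θ)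
    (hRP : IsReflectionPositiveOn θ Ep) (hmax : IsMaximalReflectionPositive θ Ep) {z : E}
    (hz : θ z = z) (hzEp : z ∈ Epᗮ) : z = 0 := by
  set W := (Ep ⊔ 𝕜 ∙ z).topologicalClosure
  have hW : IsReflectionPositiveOn θ W :=
    (hRP.sup_of_le_fixedSubmodule hθ ((Submodule.span_singleton_le_iff_mem _ _).2 hz)
      ((Submodule.span_singleton_le_iff_mem _ _).2 hzEp)).topologicalClosure
  have hWEp : W = Ep := hmax W (Submodule.isClosed_topologicalClosure _)
    (le_sup_left.trans (Submodule.le_topologicalClosure _)) hW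
  have hzW : z ∈ W := Submodule.le_topologicalClosure _
    (Submodule.mem_sup_right (Submodule.mem_span_singleton_self z))
  exact inner_self_eq_zero.1 (Submodule.inner_right_of_mem_orthogonal (hWEp ▸ hzW) hzEp)

variable [CompleteSpace E] in
lemma IsMaximalReflectionPositive.fixedSubmodule_le_map_evenPart (hθ : Function.Involutive θ)
    (hEp : IsClosed (Ep : Set E)) (hRP : IsReflectionPositiveOn θ Ep)
    (hmax : IsMaximalReflectionPositive θ Ep) :
    θ.fixedSubmodule ≤ Ep.map (θ.evenPart : E →ₗ[𝕜] E) := by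
  set D := Ep.map (θ.evenPart : E →ₗ[𝕜] E)
  have : CompleteSpace Ep := hEp.completeSpace_coe
  have : CompleteSpace D := hRP.isClosed_map_evenPart.completeSpace_coe
  intro x hx
  obtain ⟨d, hd, z, hzD, rfl⟩ := D.exists_add_mem_mem_orthogonal x
  obtain ⟨a, ha, rfl⟩ := hd
  have hz : θ z = z := by
    have hfix := θ.mem_fixedSubmodule.1 hx
    rwa [map_add, ContinuousLinearMap.coe_coe, θ.apply_evenPart hθ, add_right_inj] at hfix
  have hzEp : z ∈ Epᗮ := fun b hb => by
    rw [← θ.inner_evenPart_left hz]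
    exact hzD _ ⟨b, hb, rfl⟩
  rw [hmax.eq_zero_of_mem_orthogonal hθ hRP hz hzEp, add_zero]
  exact ⟨a, ha, rfl⟩

end

/-- **Characterization of maximal reflection positive Hilbert spaces.**
Let `(E, E₊, θ)` be a reflection positive Hilbert space (`E` a real or complex Hilbert space,
`E₊` a closed subspace, `θ` a unitary involution with `⟨ξ, θξ⟩ ≥ 0` on `E₊`).  TFAE:
(a) `(E, E₊, θ)` is maximal;
(b) there is a subspace `V ⊆ E^θ`, dense in `E^θ`, with `V ⊆ E₊ + E^{-θ}`;
(c) `E^θ ⊆ E₊ + E^{-θ}`. -/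
theorem maximal_RPHS_tfae {𝕜 E : Type*} [RCLike 𝕜] [NormedAddCommGroup E]
    [InnerProductSpace 𝕜 E] [CompleteSpace E]
    (Ep : Submodule 𝕜 E) (hEp : IsClosed (Ep : Set E))
    (θ : E ≃ₗᵢ[𝕜] E) (hθ : ∀ v : E, θ (θ v) = v)
    (hRP : IsReflectionPositiveOn θ Ep) :
    List.TFAE
      [ -- (a) maximality
        ∀ Ep' : Submodule 𝕜 E, IsClosed (Ep' : Set E) → Ep ≤ Ep' →
          IsReflectionPositiveOn θ Ep' → Ep' = Ep,
        -- (b) a dense subspace of `E^θ` contained in `E₊ + E^{-θ}`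
        ∃ V : Submodule 𝕜 E, (V : Set E) ⊆ {v : E | θ v = v} ∧
          {v : E | θ v = v} ⊆ closure (V : Set E) ∧
          ∀ v ∈ V, ∃ a ∈ Ep, ∃ b : E, θ b = -b ∧ v = a + b,
        -- (c) `E^θ ⊆ E₊ + E^{-θ}`
        ∀ v : E, θ v = v → ∃ a ∈ Ep, ∃ b : E, θ b = -b ∧ v = a + b ] := by
  tfae_have 3 → 2 := fun h => ⟨θ.fixedSubmodule, fun _ hv => hv, subset_closure, h⟩
  tfae_have 2 → 1 := by
    rintro ⟨V, hVfix, hVdense, hVdecomp⟩ Ep' - hle hRP'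
    have hVD : (V : Set E) ⊆ Ep.map (θ.evenPart : E →ₗ[𝕜] E) := fun v hv =>
      (mem_map_evenPart_iff hθ (hVfix hv)).2 (hVdecomp v hv)
    exact le_antisymm
      (le_of_fixedSubmodule_subset_closure hθ hEp hRP' hle (hVdense.trans (closure_mono hVD))) hle
  tfae_have 1 → 3 := fun hmax v hv =>
    (mem_map_evenPart_iff hθ hv).1 (IsMaximalReflectionPositive.fixedSubmodule_le_map_evenPart hθ hEp hRP hmax hv)
  tfae_finish
end

section
/- The complex linear span of {q_z : z ∈ ℂ_r} is dense in C([0,∞],ℂ) with respect to the supremum norm, and the real linear span of {q_z : z ∈ (0,∞)} is dense in C([0,∞],ℝ) with respect to the supremum norm. -/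
open scoped ENNReal NNReal

/-- We model the one-point compactification `[0,∞]` of `[0,∞)` by `ℝ≥0∞`.
For `z ∈ ℂ` with `Re z > 0`, `q_z : [0,∞] → ℂ` is the continuous function with
`q_z(λ) = (λ+1)/(λ+z)` for `λ ∈ [0,∞)` and `q_z(∞) = 1`; here we describe the
set of all such continuous functions by their values. -/
def qSetC : Set C(ℝ≥0∞, ℂ) :=
  {f | ∃ z : ℂ, 0 < z.re ∧ f ∞ = 1 ∧
    ∀ t : ℝ≥0, f (t : ℝ≥0∞) = (((t : ℝ) : ℂ) + 1) / (((t : ℝ) : ℂ) + z)}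

/-- The corresponding real-valued functions `q_z` for real `z ∈ (0,∞)`. -/
def qSetR : Set C(ℝ≥0∞, ℝ) :=
  {f | ∃ z : ℝ, 0 < z ∧ f ∞ = 1 ∧
    ∀ t : ℝ≥0, f (t : ℝ≥0∞) = ((t : ℝ) + 1) / ((t : ℝ) + z)}

/-!
For `z ≠ w` partial fractions give `q_z q_w = ((1 - z) q_z + (w - 1) q_w) / (w - z)`, and
`q_z ^ 2` is the uniform limit of `q_z q_w` as `w → z`; hence the closed span of the `q_z` is
closed under products. It contains `q_1 = 1`, is closed under conjugation (`star q_z = q_{z̄}`),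
and `q_2` separates the points of `[0,∞]`, so by Stone–Weierstrass it is everything. The argument
only uses that `λ ↦ λ / (λ + 1)` embeds `[0,∞]` into `[0,1]`, so it works verbatim for any
embedding of a compact space into `[0,1]`.
-/

open Submodule Set Filter Topology RCLike unitInterval

section

variable {R A : Type*} [CommSemiring R] [Semiring A] [Algebra R A] [TopologicalSpace A]
  [ContinuousAdd A] [ContinuousConstSMul R A] [ContinuousMul A] {Q : Set A}

theorem Submodule.mul_mem_topologicalClosure_span
    (hQ : ∀ f ∈ Q, ∀ g ∈ Q, f * g ∈ (span R Q).topologicalClosure) {f g : A}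
    (hf : f ∈ (span R Q).topologicalClosure) (hg : g ∈ (span R Q).topologicalClosure) :
    f * g ∈ (span R Q).topologicalClosure := by
  have hspan : span R Q * span R Q ≤ (span R Q).topologicalClosure := by
    rw [span_mul_span, span_le]
    rintro _ ⟨a, ha, b, hb, rfl⟩
    exact hQ a ha b hb
  rw [← SetLike.mem_coe, topologicalClosure_coe] at hf hg
  exact (isClosed_topologicalClosure _).closure_subset
    (map_mem_closure₂ continuous_mul hf hg fun a ha b hb => hspan (mul_mem_mul ha hb))

end

section

variable {R A : Type*} [CommSemiring R] [StarRing R] [AddCommMonoid A] [Module R A]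
  [StarAddMonoid A] [StarModule R A] {Q : Set A}

theorem Submodule.star_mem_span (hQ : ∀ f ∈ Q, star f ∈ Q) {f : A} (hf : f ∈ span R Q) :
    star f ∈ span R Q := by
  induction hf using span_induction with
  | mem x hx => exact subset_span (hQ x hx)
  | zero => simp
  | add x y _ _ hx hy => simpa using add_mem hx hy
  | smul c x _ hx => simpa using smul_mem _ (star c) hx

theorem Submodule.star_mem_topologicalClosure_span [TopologicalSpace A] [ContinuousAdd A]
    [ContinuousConstSMul R A] [ContinuousStar A] (hQ : ∀ f ∈ Q, star f ∈ Q) {f : A}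
    (hf : f ∈ (span R Q).topologicalClosure) : star f ∈ (span R Q).topologicalClosure := by
  rw [← SetLike.mem_coe, topologicalClosure_coe] at hf ⊢
  exact map_mem_closure continuous_star hf fun a ha => star_mem_span hQ ha

end

theorem ContinuousMap.dense_span_of_mul_mem {X 𝕜 : Type*} [TopologicalSpace X] [CompactSpace X]
    [RCLike 𝕜] {Q : Set C(X, 𝕜)} (one_mem : 1 ∈ Q) (star_mem : ∀ f ∈ Q, star f ∈ Q)
    (mul_mem : ∀ f ∈ Q, ∀ g ∈ Q, f * g ∈ (span 𝕜 Q).topologicalClosure)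
    (sep : ∀ x y, x ≠ y → ∃ f ∈ Q, f x ≠ f y) : Dense (span 𝕜 Q : Set C(X, 𝕜)) := by
  let A : StarSubalgebra 𝕜 C(X, 𝕜) :=
    { (span 𝕜 Q).topologicalClosure.toSubalgebra
        (le_topologicalClosure _ (subset_span one_mem))
        fun _ _ => mul_mem_topologicalClosure_span mul_mem with
      star_mem' := star_mem_topologicalClosure_span star_mem }
  have hA : A.SeparatesPoints := fun x y hxy => by
    obtain ⟨f, hf, hfxy⟩ := sep x y hxy
    exact ⟨f, ⟨f, le_topologicalClosure _ (subset_span hf), rfl⟩, hfxy⟩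
  have hA_closed : IsClosed (A : Set C(X, 𝕜)) := isClosed_topologicalClosure _
  have hA_top := congrArg SetLike.coe
    (ContinuousMap.starSubalgebra_topologicalClosure_eq_top_of_separatesPoints A hA)
  rw [StarSubalgebra.topologicalClosure_coe, hA_closed.closure_eq] at hA_top
  rw [dense_iff_closure_eq, ← topologicalClosure_coe]
  exact hA_top

section

variable {𝕜 X : Type*} [RCLike 𝕜] [TopologicalSpace X]

theorem re_add_one_sub_mul_pos {z : 𝕜} (hz : 0 < re z) (s : I) :
    0 < re (z + (1 - z) * (s : ℝ)) := by
  have hre : re (z + (1 - z) * (s : ℝ)) = (1 - s) * re z + s := by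
    simp only [map_add, mul_re, map_sub, one_re, ofReal_re, one_im, zero_sub, ofReal_im,
      mul_zero, sub_zero]
    ring
  rw [hre]
  rcases s.2.1.eq_or_lt with hs | hs
  · simpa [← hs]
  · linarith [mul_nonneg (sub_nonneg.2 s.2.2) hz.le]

theorem add_one_sub_mul_ne_zero {z : 𝕜} (hz : 0 < re z) (s : I) :
    z + (1 - z) * (s : ℝ) ≠ 0 := fun h =>
  (re_add_one_sub_mul_pos hz s).ne' (by rw [h, map_zero])

/-- With `s = λ / (λ + 1)` this is the function `q_z(λ) = (λ + 1) / (λ + z)`. -/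
def qFun (s : C(X, I)) (z : {z : 𝕜 // 0 < re z}) : C(X, 𝕜) where
  toFun x := ((z : 𝕜) + (1 - z) * (s x : ℝ))⁻¹
  continuous_toFun := Continuous.inv₀ (by fun_prop) fun x => add_one_sub_mul_ne_zero z.2 (s x)

@[simp]
theorem qFun_apply (s : C(X, I)) (z : {z : 𝕜 // 0 < re z}) (x : X) :
    qFun s z x = ((z : 𝕜) + (1 - z) * (s x : ℝ))⁻¹ := rfl

variable (s : C(X, I))

theorem qFun_one : qFun s ⟨1, by simp⟩ = (1 : C(X, 𝕜)) := by
  ext; simp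

theorem star_qFun (z : {z : 𝕜 // 0 < re z}) :
    star (qFun s z) = qFun s ⟨starRingEnd 𝕜 z, by simpa using z.2⟩ := by
  ext; simp

theorem qFun_mul_qFun {z w : {z : 𝕜 // 0 < re z}} (hzw : (z : 𝕜) ≠ w) :
    qFun s z * qFun s w =
      ((1 - z) / (w - z) : 𝕜) • qFun s z + ((w - 1) / (w - z) : 𝕜) • qFun s w := by
  ext x
  set a := (z : 𝕜) + (1 - z) * (s x : ℝ) with ha
  set b := (w : 𝕜) + (1 - w) * (s x : ℝ) with hb
  have key : (1 - z) * b + (w - 1) * a = w - z := by ring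
  have hwz : (w : 𝕜) - z ≠ 0 := sub_ne_zero.2 hzw.symm
  have ha0 : a ≠ 0 := add_one_sub_mul_ne_zero z.2 (s x)
  have hb0 : b ≠ 0 := add_one_sub_mul_ne_zero w.2 (s x)
  simp only [ContinuousMap.mul_apply, ContinuousMap.add_apply, ContinuousMap.smul_apply,
    qFun_apply, smul_eq_mul, ← ha, ← hb]
  field_simp
  linear_combination key.symm

theorem continuous_qFun : Continuous (qFun (𝕜 := 𝕜) s) :=
  ContinuousMap.continuous_of_continuous_uncurry _ <|
    Continuous.inv₀ (by fun_prop) fun p => add_one_sub_mul_ne_zero p.1.2 (s p.2)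

theorem qFun_mul_qFun_mem_topologicalClosure [CompactSpace X] (z w : {z : 𝕜 // 0 < re z}) :
    qFun s z * qFun s w ∈ (span 𝕜 (range (qFun s))).topologicalClosure := by
  set S := (span 𝕜 (range (qFun (𝕜 := 𝕜) s))).topologicalClosure
  have off_diag (w : {z : 𝕜 // 0 < re z}) (hzw : (z : 𝕜) ≠ w) : qFun s z * qFun s w ∈ S := by
    have hmem (v : {z : 𝕜 // 0 < re z}) : qFun s v ∈ S :=
      le_topologicalClosure _ (subset_span (mem_range_self v))
    rw [qFun_mul_qFun s hzw]
    exact add_mem (smul_mem _ _ (hmem z)) (smul_mem _ _ (hmem w))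
  by_cases hzw : (z : 𝕜) = w
  swap
  · exact off_diag w hzw
  obtain rfl : z = w := Subtype.ext hzw
  let zn (n : ℕ) : {z : 𝕜 // 0 < re z} :=
    ⟨z + ((1 / (n + 1) : ℝ) : 𝕜), by
      rw [map_add, ofReal_re]; exact add_pos z.2 Nat.one_div_pos_of_nat⟩
  have hzn : Tendsto zn atTop (𝓝 z) := by
    have h := (tendsto_const_nhds (x := (z : 𝕜))).add
      ((continuous_ofReal.tendsto 0).comp tendsto_one_div_add_atTop_nhds_zero_nat)
    rw [ofReal_zero, add_zero] at h
    exact tendsto_subtype_rng.2 h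
  refine (isClosed_topologicalClosure _).mem_of_tendsto
    (((continuous_const.mul (continuous_qFun s)).tendsto z).comp hzn)
    (Eventually.of_forall fun n => off_diag _ fun h => ?_)
  exact Nat.one_div_pos_of_nat.ne' (ofReal_eq_zero.1 (add_eq_left.1 h.symm))

theorem exists_qFun_apply_ne {s : C(X, I)} (hs : Function.Injective s) {x y : X} (hxy : x ≠ y) :
    ∃ f ∈ range (qFun (𝕜 := 𝕜) s), f x ≠ f y := by
  refine ⟨qFun s ⟨2, by simp⟩, mem_range_self _, fun h => hxy (hs (Subtype.ext ?_))⟩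
  have h2 : (1 - 2 : 𝕜) ≠ 0 := by norm_num
  simpa [h2] using h

theorem dense_span_range_qFun [CompactSpace X] {s : C(X, I)} (hs : Function.Injective s) :
    Dense (span 𝕜 (range (qFun (𝕜 := 𝕜) s)) : Set C(X, 𝕜)) :=
  ContinuousMap.dense_span_of_mul_mem ⟨_, qFun_one s⟩
    (forall_mem_range.2 fun z => star_qFun s z ▸ mem_range_self _)
    (forall_mem_range.2 fun z => forall_mem_range.2 (qFun_mul_qFun_mem_topologicalClosure s z))
    fun _ _ => exists_qFun_apply_ne hs

end

namespace ENNReal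

noncomputable def toUnitInterval : C(ℝ≥0∞, I) :=
  ⟨orderIsoUnitIntervalBirational, orderIsoUnitIntervalBirational.continuous⟩

theorem toUnitInterval_injective : Function.Injective toUnitInterval :=
  orderIsoUnitIntervalBirational.injective

theorem toUnitInterval_top : (toUnitInterval ∞ : ℝ) = 1 := by
  simp [toUnitInterval]

theorem toUnitInterval_coe (t : ℝ≥0) : (toUnitInterval t : ℝ) = t / (t + 1) := by
  rcases eq_or_ne t 0 with rfl | ht
  · simp [toUnitInterval]
  · have ht' : (t : ℝ) ≠ 0 := by exact_mod_cast ht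
    simp only [toUnitInterval, ContinuousMap.coe_mk, orderIsoUnitIntervalBirational_apply_coe]
    rw [toReal_inv, toReal_add (by simpa) one_ne_top, toReal_inv, coe_toReal, toReal_one]
    field_simp
    ring

end ENNReal

open ENNReal

section

variable {𝕜 : Type*} [RCLike 𝕜]

theorem qFun_toUnitInterval_top (z : {z : 𝕜 // 0 < re z}) : qFun toUnitInterval z ∞ = 1 := by
  simp [toUnitInterval_top]

theorem qFun_toUnitInterval_coe (z : {z : 𝕜 // 0 < re z}) (t : ℝ≥0) :
    qFun toUnitInterval z t = (((t : ℝ) : 𝕜) + 1) / (((t : ℝ) : 𝕜) + z) := by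
  have ht : ((t : ℝ) : 𝕜) + 1 ≠ 0 := by norm_cast; positivity
  rw [qFun_apply, toUnitInterval_coe, inv_eq_iff_eq_inv, inv_div]
  push_cast
  field_simp
  ring

theorem range_qFun_toUnitInterval :
    range (qFun (𝕜 := 𝕜) toUnitInterval) = {f | ∃ z : 𝕜, 0 < re z ∧ f ∞ = 1 ∧
      ∀ t : ℝ≥0, f t = (((t : ℝ) : 𝕜) + 1) / (((t : ℝ) : 𝕜) + z)} := by
  ext f
  constructor
  · rintro ⟨z, rfl⟩
    exact ⟨z, z.2, qFun_toUnitInterval_top z, qFun_toUnitInterval_coe z⟩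
  · rintro ⟨z, hz, htop, hcoe⟩
    refine ⟨⟨z, hz⟩, ContinuousMap.ext fun t => ?_⟩
    induction t using recTopCoe with
    | top => rw [htop, qFun_toUnitInterval_top]
    | coe t => rw [hcoe, qFun_toUnitInterval_coe]

end

/-- **Density of the functions `q_z`.**
The complex linear span of `{q_z : Re z > 0}` is dense in `C([0,∞], ℂ)` and the real
linear span of `{q_z : z ∈ (0,∞)}` is dense in `C([0,∞], ℝ)` (for the supremum norm,
i.e. the canonical topology of `C([0,∞], ·)` with `[0,∞]` compact). -/
theorem span_q_dense :
    Dense ((Submodule.span ℂ qSetC : Submodule ℂ C(ℝ≥0∞, ℂ)) : Set C(ℝ≥0∞, ℂ)) ∧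
    Dense ((Submodule.span ℝ qSetR : Submodule ℝ C(ℝ≥0∞, ℝ)) : Set C(ℝ≥0∞, ℝ)) := by
  have hC : qSetC = range (qFun (𝕜 := ℂ) toUnitInterval) := range_qFun_toUnitInterval.symm
  have hR : qSetR = range (qFun (𝕜 := ℝ) toUnitInterval) := range_qFun_toUnitInterval.symm
  rw [hC, hR]
  exact ⟨dense_span_range_qFun toUnitInterval_injective,
    dense_span_range_qFun toUnitInterval_injective⟩
end

section
/- Let ν and ν' be finite Borel measures on [0,∞]. Then Ψ_ν(p) = Ψ_{ν'}(p) for all p ∈ ℝ ∖ {0} if and only if ν = ν'. -/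
open MeasureTheory
open scoped ENNReal

/-- For a finite Borel measure `ν` on `[0,∞]` (modelled by `ℝ≥0∞`),
`Ψ_ν(p) = (1/π) ∫_{[0,∞]} (1+λ²)/(p²+λ²) dν(λ)`, where the integrand takes the
value `1` at `λ = ∞`. -/
noncomputable def Psi (ν : Measure ℝ≥0∞) (p : ℝ) : ℝ :=
  (1 / Real.pi) *
    ∫ l, (if l = ∞ then 1 else (1 + l.toReal ^ 2) / (p ^ 2 + l.toReal ^ 2)) ∂ν

/-!
The integrand of `Ψ_ν(p)` is `1 + (1 - p²) g_{p²}` with `g_a(λ) = 1 / (a + λ²)`, so `Ψ_ν`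
determines the mass of `ν` (take `p = 1`) and `∫ g_a dν` for `0 < a ≠ 1`, hence for all `a > 0`
by continuity of `a ↦ g_a`. The resolvent identity `g_a - g_b = (b - a) g_a g_b` puts products
`g_a g_b` with `a ≠ b` in the span of the `g_a`, and squares `g_a²` in its closure as limits
`b → a`. So the closed span of `1` and the `g_a` is a subalgebra of `C([0,∞], ℝ)`; it separates
points, hence is everything by Stone–Weierstrass, and finite measures on `[0,∞]` are determined by
the integrals of continuous functions.
-/

open Set Filter Topology

theorem Submodule.topologicalClosure_mul_le_of_mul_le {R A : Type*} [CommSemiring R]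
    [Semiring A] [Algebra R A] [TopologicalSpace A] [ContinuousAdd A] [ContinuousMul A]
    [ContinuousConstSMul R A] {V : Submodule R A} (h : V * V ≤ V.topologicalClosure) :
    V.topologicalClosure * V.topologicalClosure ≤ V.topologicalClosure := by
  refine Submodule.mul_le.2 fun f hf g hg => ?_
  have := map_mem_closure₂ continuous_mul hf hg fun a ha b hb => h (Submodule.mul_mem_mul ha hb)
  rwa [V.isClosed_topologicalClosure.closure_eq] at this

namespace ContinuousMap

variable {X : Type*} [TopologicalSpace X] [CompactSpace X]

theorem topologicalClosure_span_eq_top_of_separatesPoints {s : Set C(X, ℝ)} (h_one : 1 ∈ s)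
    (h_mul : ∀ f ∈ s, ∀ g ∈ s, f * g ∈ (Submodule.span ℝ s).topologicalClosure)
    (h_sep : ∀ x y, x ≠ y → ∃ f ∈ s, f x ≠ f y) :
    (Submodule.span ℝ s).topologicalClosure = ⊤ := by
  set V := Submodule.span ℝ s
  have hVV : V * V ≤ V.topologicalClosure := by
    rw [Submodule.span_mul_span, Submodule.span_le]
    rintro _ ⟨f, hf, g, hg, rfl⟩
    exact h_mul f hf g hg
  let A : Subalgebra ℝ C(X, ℝ) := V.topologicalClosure.toSubalgebra
    (V.le_topologicalClosure (Submodule.subset_span h_one))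
    fun _ _ hf hg => Submodule.topologicalClosure_mul_le_of_mul_le hVV
      (Submodule.mul_mem_mul hf hg)
  have hA : A.topologicalClosure = ⊤ := by
    refine subalgebra_topologicalClosure_eq_top_of_separatesPoints A fun x y hxy => ?_
    obtain ⟨f, hf, hfxy⟩ := h_sep x y hxy
    exact ⟨f, ⟨f, V.le_topologicalClosure (Submodule.subset_span hf), rfl⟩, hfxy⟩
  have hA_closed : A.topologicalClosure = A :=
    SetLike.coe_injective V.isClosed_topologicalClosure.closure_eq
  calc V.topologicalClosure = Subalgebra.toSubmodule A := rfl
    _ = ⊤ := Algebra.toSubmodule_eq_top.2 (hA_closed ▸ hA)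

end ContinuousMap

namespace MeasureTheory

variable {X : Type*} [TopologicalSpace X] [CompactSpace X] [MeasurableSpace X] [BorelSpace X]

noncomputable def integralCLM (μ : Measure X) [IsFiniteMeasure μ] : C(X, ℝ) →L[ℝ] ℝ :=
  L1.integralCLM.comp (ContinuousMap.toLp 1 μ ℝ)

theorem integralCLM_apply (μ : Measure X) [IsFiniteMeasure μ] (f : C(X, ℝ)) :
    integralCLM μ f = ∫ x, f x ∂μ := by
  rw [integralCLM, ContinuousLinearMap.comp_apply, ← L1.integral_def, L1.integral_eq_integral]
  exact integral_congr_ae (ContinuousMap.coeFn_toLp μ f)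

variable {μ ν : Measure X} [IsFiniteMeasure μ] [IsFiniteMeasure ν] {s : Set C(X, ℝ)}

theorem integral_eq_of_mem_topologicalClosure_span (h : ∀ f ∈ s, ∫ x, f x ∂μ = ∫ x, f x ∂ν)
    {f : C(X, ℝ)} (hf : f ∈ (Submodule.span ℝ s).topologicalClosure) :
    ∫ x, f x ∂μ = ∫ x, f x ∂ν := by
  have hs : Submodule.span ℝ s ≤ (integralCLM μ).eqLocus (integralCLM ν) :=
    Submodule.span_le.2 fun g hg => by simpa [integralCLM_apply] using h g hg
  have := (Submodule.span ℝ s).topologicalClosure_minimal hs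
    ((integralCLM μ).isClosed_eqLocus (integralCLM ν)) hf
  simpa [integralCLM_apply] using this

theorem ext_of_forall_integral_eq_of_topologicalClosure_span_eq_top [HasOuterApproxClosed X]
    (hs : (Submodule.span ℝ s).topologicalClosure = ⊤)
    (h : ∀ f ∈ s, ∫ x, f x ∂μ = ∫ x, f x ∂ν) : μ = ν :=
  ext_of_forall_integral_eq_of_IsFiniteMeasure fun f =>
    integral_eq_of_mem_topologicalClosure_span h (hs ▸ Submodule.mem_top (x := f.toContinuousMap))

end MeasureTheory

/-- `l ↦ 1 / (a + l²)` on `[0,∞]`, vanishing at `∞`; it is the junk value `0` when `a ≤ 0`. -/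
noncomputable def invAddSq (a : ℝ) : C(ℝ≥0∞, ℝ) :=
  if ha : 0 < a then
    { toFun := fun l => (ENNReal.ofReal a + l ^ 2)⁻¹.toReal
      continuous_toFun := by
        have hinv : Continuous fun l : ℝ≥0∞ => (ENNReal.ofReal a + l ^ 2)⁻¹ :=
          (continuous_const.add (ENNReal.continuous_pow 2)).inv
        refine continuous_iff_continuousAt.2 fun l => ?_
        have hfin : (ENNReal.ofReal a + l ^ 2)⁻¹ ≠ ∞ := by simp [ha]
        exact (ENNReal.tendsto_toReal hfin).comp hinv.continuousAt }
  else 0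

theorem invAddSq_apply {a : ℝ} (ha : 0 < a) (l : ℝ≥0∞) :
    invAddSq a l = (ENNReal.ofReal a + l ^ 2)⁻¹.toReal := by
  simp [invAddSq, ha]

theorem invAddSq_apply_top (a : ℝ) : invAddSq a ∞ = 0 := by
  by_cases ha : 0 < a
  · simp [invAddSq_apply ha]
  · simp [invAddSq, ha]

theorem invAddSq_apply_of_ne_top {a : ℝ} (ha : 0 < a) {l : ℝ≥0∞} (hl : l ≠ ∞) :
    invAddSq a l = (a + l.toReal ^ 2)⁻¹ := by
  rw [invAddSq_apply ha, ← ENNReal.ofReal_toReal hl, ← ENNReal.ofReal_pow ENNReal.toReal_nonneg,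
    ← ENNReal.ofReal_add ha.le (sq_nonneg _), ENNReal.toReal_inv,
    ENNReal.toReal_ofReal (by positivity), ENNReal.toReal_ofReal ENNReal.toReal_nonneg]

theorem invAddSq_injective {a : ℝ} (ha : 0 < a) : Function.Injective (invAddSq a) := by
  intro x y hxy
  simp only [invAddSq_apply ha] at hxy
  rw [ENNReal.toReal_eq_toReal_iff' (by simp [ha.not_ge]) (by simp [ha.not_ge]), inv_inj,
    ENNReal.add_right_inj ENNReal.ofReal_ne_top] at hxy
  exact (ENNReal.pow_right_strictMono two_ne_zero).injective hxy

theorem invAddSq_sub_invAddSq {a b : ℝ} (ha : 0 < a) (hb : 0 < b) :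
    invAddSq a - invAddSq b = (b - a) • (invAddSq a * invAddSq b) := by
  ext l
  rcases eq_or_ne l ∞ with rfl | hl
  · simp [invAddSq_apply_top]
  · simp only [ContinuousMap.sub_apply, ContinuousMap.smul_apply, ContinuousMap.mul_apply,
      smul_eq_mul, invAddSq_apply_of_ne_top ha hl, invAddSq_apply_of_ne_top hb hl]
    field_simp
    ring

theorem norm_invAddSq_le {a : ℝ} (ha : 0 < a) : ‖invAddSq a‖ ≤ a⁻¹ := by
  refine (ContinuousMap.norm_le _ (inv_nonneg.2 ha.le)).2 fun l => ?_
  rcases eq_or_ne l ∞ with rfl | hl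
  · simpa [invAddSq_apply_top] using ha.le
  · rw [invAddSq_apply_of_ne_top ha hl, Real.norm_of_nonneg (by positivity)]
    exact inv_anti₀ ha (le_add_of_nonneg_right (sq_nonneg _))

theorem continuousOn_invAddSq : ContinuousOn invAddSq (Ioi 0) := by
  intro a (ha : 0 < a)
  have hbound : ∀ b ∈ Ioi (0 : ℝ), ‖invAddSq b - invAddSq a‖ ≤ |a - b| * b⁻¹ * a⁻¹ := by
    intro b hb
    rw [invAddSq_sub_invAddSq hb ha, norm_smul, mul_assoc, Real.norm_eq_abs]
    gcongr
    exact (norm_mul_le _ _).trans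
      (mul_le_mul (norm_invAddSq_le hb) (norm_invAddSq_le ha) (norm_nonneg _)
        (inv_nonneg.2 (le_of_lt hb)))
  have hlim : Tendsto (fun b => |a - b| * b⁻¹ * a⁻¹) (𝓝 a) (𝓝 0) := by
    have : ContinuousAt (fun b => |a - b| * b⁻¹ * a⁻¹) a := by fun_prop (disch := exact ha.ne')
    simpa using this.tendsto
  exact tendsto_iff_norm_sub_tendsto_zero.2 <| squeeze_zero'
    (Eventually.of_forall fun _ => norm_nonneg _) (eventually_nhdsWithin_of_forall hbound)
    (tendsto_nhdsWithin_of_tendsto_nhds hlim)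

theorem invAddSq_mem_closure_image_Ioi {a : ℝ} (ha : 0 < a) :
    invAddSq a ∈ closure (invAddSq '' Ioi a) :=
  ((continuousOn_invAddSq a ha).mono (Ioi_subset_Ioi ha.le)).mem_closure_image
    (by rw [closure_Ioi]; exact self_mem_Ici)

theorem topologicalClosure_span_invAddSq_eq_top :
    (Submodule.span ℝ (insert 1 (invAddSq '' Ioi 0))).topologicalClosure = ⊤ := by
  set V := Submodule.span ℝ (insert 1 (invAddSq '' Ioi 0))
  have hG : ∀ {a : ℝ}, 0 < a → invAddSq a ∈ V := fun ha =>
    Submodule.subset_span (mem_insert_of_mem _ (mem_image_of_mem _ ha))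
  have hGG : ∀ {a b : ℝ}, 0 < a → 0 < b → a ≠ b → invAddSq a * invAddSq b ∈ V := by
    intro a b ha hb hab
    rw [← inv_smul_smul₀ (sub_ne_zero.2 hab.symm) (invAddSq a * invAddSq b),
      ← invAddSq_sub_invAddSq ha hb]
    exact V.smul_mem _ (V.sub_mem (hG ha) (hG hb))
  refine ContinuousMap.topologicalClosure_span_eq_top_of_separatesPoints (mem_insert _ _) ?_
    fun x y hxy => ⟨invAddSq 1, mem_insert_of_mem _ (mem_image_of_mem _ (mem_Ioi.2 one_pos)),
      (invAddSq_injective one_pos).ne hxy⟩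
  rintro _ (rfl | ⟨a, ha, rfl⟩) _ (rfl | ⟨b, hb, rfl⟩)
  · exact V.le_topologicalClosure (by simpa using Submodule.subset_span (mem_insert _ _))
  · exact V.le_topologicalClosure (by simpa using hG hb)
  · exact V.le_topologicalClosure (by simpa using hG ha)
  · rcases eq_or_ne a b with rfl | hab
    · exact map_mem_closure (continuous_const_mul _) (invAddSq_mem_closure_image_Ioi ha)
        (by rintro _ ⟨b, hb, rfl⟩; exact hGG ha (ha.trans hb) hb.ne)
    · exact V.le_topologicalClosure (hGG ha hb hab)

theorem Psi_eq_real_univ_add_integral_invAddSq (ν : Measure ℝ≥0∞) [IsFiniteMeasure ν] {p : ℝ}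
    (hp : p ≠ 0) :
    Psi ν p = 1 / Real.pi * (ν.real univ + (1 - p ^ 2) * ∫ l, invAddSq (p ^ 2) l ∂ν) := by
  have hp2 : 0 < p ^ 2 := by positivity
  have hintegrand : (fun l : ℝ≥0∞ =>
      if l = ∞ then 1 else (1 + l.toReal ^ 2) / (p ^ 2 + l.toReal ^ 2)) =
      ⇑(1 + (1 - p ^ 2) • invAddSq (p ^ 2) : C(ℝ≥0∞, ℝ)) := by
    funext l
    rcases eq_or_ne l ∞ with rfl | hl
    · simp [invAddSq_apply_top]
    · simp only [if_neg hl, ContinuousMap.add_apply, ContinuousMap.one_apply,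
        ContinuousMap.smul_apply, smul_eq_mul, invAddSq_apply_of_ne_top hp2 hl]
      field_simp
      ring
  rw [Psi, hintegrand, ← integralCLM_apply, map_add, map_smul, integralCLM_apply,
    integralCLM_apply]
  simp

/-- **Injectivity of `ν ↦ Ψ_ν`.**  For finite Borel measures `ν, ν'` on `[0,∞]`,
one has `Ψ_ν(p) = Ψ_{ν'}(p)` for all `p ∈ ℝ ∖ {0}` if and only if `ν = ν'`. -/
theorem Psi_inj (ν ν' : Measure ℝ≥0∞) [IsFiniteMeasure ν] [IsFiniteMeasure ν'] :
    (∀ p : ℝ, p ≠ 0 → Psi ν p = Psi ν' p) ↔ ν = ν' := by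
  refine ⟨fun h => ?_, fun h _ _ => h ▸ rfl⟩
  have hΨ : ∀ p : ℝ, p ≠ 0 → ν.real univ + (1 - p ^ 2) * ∫ l, invAddSq (p ^ 2) l ∂ν =
      ν'.real univ + (1 - p ^ 2) * ∫ l, invAddSq (p ^ 2) l ∂ν' := fun p hp => by
    simpa [Psi_eq_real_univ_add_integral_invAddSq _ hp, Real.pi_ne_zero] using h p hp
  have hmass : ν.real univ = ν'.real univ := by simpa using hΨ 1 one_ne_zero
  have hinvAddSq : ∀ a : ℝ, 0 < a → a ≠ 1 →
      ∫ l, invAddSq a l ∂ν = ∫ l, invAddSq a l ∂ν' := fun a ha ha1 => by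
    have := hΨ (√a) (Real.sqrt_ne_zero'.2 ha)
    rw [Real.sq_sqrt ha.le, hmass] at this
    exact mul_left_cancel₀ (sub_ne_zero.2 ha1.symm) (add_left_cancel this)
  refine ext_of_forall_integral_eq_of_topologicalClosure_span_eq_top
    topologicalClosure_span_invAddSq_eq_top ?_
  rintro _ (rfl | ⟨a, ha, rfl⟩)
  · simpa using hmass
  rcases eq_or_ne a 1 with rfl | ha1
  · exact integral_eq_of_mem_topologicalClosure_span
      (by rintro _ ⟨b, hb, rfl⟩; exact hinvAddSq b (one_pos.trans hb) hb.ne')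
      (closure_mono Submodule.subset_span (invAddSq_mem_closure_image_Ioi one_pos))
  · exact hinvAddSq a ha ha1
end

section
/- Let μ be a finite Borel measure on (0,∞). Then ψ_μ belongs to L¹(ℝ,ℂ) with ‖ψ_μ‖₁ = μ((0,∞)), and its Fourier transform equals φ_μ: for every t ∈ ℝ, ∫_ℝ e^{−itp} ψ_μ(p) dp = φ_μ(t) = ∫_{(0,∞)} e^{−λ|t|} dμ(λ). -/
/-!
ψ_μ is the μ-mixture of the Poisson kernels `l / (π (l² + p²))`, each a probability density on
ℝ whose Fourier transform is `e^{-l|t|}`. The latter is obtained by computing the (elementary)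
Fourier transform `2l / (l² + 4π²ξ²)` of `e^{-l|t|}` and inverting it. Tonelli and Fubini then
transfer the total mass and the Fourier transform of the kernels to the mixture.
-/

open MeasureTheory

/-- For a finite Borel measure `μ` on `(0,∞)` (a finite measure on `ℝ` giving no mass to
`(-∞,0]`), `ψ_μ(p) = (1/π) ∫ λ/(λ²+p²) dμ(λ)`. -/
noncomputable def psiFn (μ : Measure ℝ) (p : ℝ) : ℝ :=
  (1 / Real.pi) * ∫ l, l / (l ^ 2 + p ^ 2) ∂μ

open Set Real FourierTransform

lemma div_sq_add_sq_eq_inv_mul {l : ℝ} (hl : l ≠ 0) (p : ℝ) :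
    l / (l ^ 2 + p ^ 2) = l⁻¹ * (1 + (p / l) ^ 2)⁻¹ := by
  field_simp

lemma integrable_div_sq_add_sq {l : ℝ} (hl : l ≠ 0) :
    Integrable (fun p : ℝ => l / (l ^ 2 + p ^ 2)) := by
  simpa only [div_sq_add_sq_eq_inv_mul hl] using
    (integrable_inv_one_add_sq.comp_div hl).const_mul l⁻¹

lemma integral_univ_div_sq_add_sq {l : ℝ} (hl : 0 < l) :
    ∫ p : ℝ, l / (l ^ 2 + p ^ 2) = π := by
  simp_rw [div_sq_add_sq_eq_inv_mul hl.ne']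
  rw [integral_const_mul, Measure.integral_comp_div (fun p : ℝ => (1 + p ^ 2)⁻¹) l,
    integral_univ_inv_one_add_sq, abs_of_pos hl, smul_eq_mul, inv_mul_cancel_left₀ hl.ne']

lemma integrable_exp_neg_mul_abs {l : ℝ} (hl : 0 < l) :
    Integrable (fun t : ℝ => rexp (-(l * |t|))) := by
  rw [← integrableOn_univ, ← Iic_union_Ioi (a := 0), integrableOn_union]
  constructor
  · refine (integrableOn_exp_mul_Iic hl 0).congr_fun (fun t ht => ?_) measurableSet_Iic
    rw [abs_of_nonpos ht, mul_neg, neg_neg]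
  · refine (integrableOn_exp_mul_Ioi (neg_neg_of_pos hl) 0).congr_fun (fun t ht => ?_)
      measurableSet_Ioi
    simp only [abs_of_pos (mem_Ioi.mp ht), neg_mul]

lemma fourier_exp_neg_mul_abs {l : ℝ} (hl : 0 < l) (ξ : ℝ) :
    𝓕 (fun t : ℝ => (rexp (-(l * |t|)) : ℂ)) ξ
      = ((2 * l / (l ^ 2 + (2 * π * ξ) ^ 2) : ℝ) : ℂ) := by
  set a : ℂ := l - 2 * π * ξ * Complex.I
  set b : ℂ := l + 2 * π * ξ * Complex.I
  have ha : 0 < a.re := by simpa [a] using hl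
  have hb : 0 < b.re := by simpa [b] using hl
  set f : ℝ → ℂ := fun v =>
    Complex.exp (↑(-2 * π * v * ξ) * Complex.I) • (rexp (-(l * |v|)) : ℂ)
  have hIic : EqOn f (fun v : ℝ => Complex.exp (a * v)) (Iic 0) := by
    intro v hv
    simp only [f, a, abs_of_nonpos (mem_Iic.mp hv), smul_eq_mul, Complex.ofReal_exp,
      ← Complex.exp_add]
    congr 1
    push_cast
    ring
  have hIoi : EqOn f (fun v : ℝ => Complex.exp (-b * v)) (Ioi 0) := by
    intro v hv
    simp only [f, b, abs_of_pos (mem_Ioi.mp hv), smul_eq_mul, Complex.ofReal_exp,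
      ← Complex.exp_add]
    congr 1
    push_cast
    ring
  rw [Real.fourier_real_eq_integral_exp_smul,
    ← intervalIntegral.integral_Iic_add_Ioi
      ((integrableOn_exp_mul_complex_Iic ha 0).congr_fun hIic.symm measurableSet_Iic)
      ((integrableOn_exp_mul_complex_Ioi (by simpa using hb) 0).congr_fun hIoi.symm
        measurableSet_Ioi),
    setIntegral_congr_fun measurableSet_Iic hIic, setIntegral_congr_fun measurableSet_Ioi hIoi,
    integral_exp_mul_complex_Iic ha, integral_exp_mul_complex_Ioi (by simpa using hb)]
  have ha0 : a ≠ 0 := fun h => by simp [h] at ha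
  have hb0 : b ≠ 0 := fun h => by simp [h] at hb
  have hab : a * b = ((l ^ 2 + (2 * π * ξ) ^ 2 : ℝ) : ℂ) := by
    push_cast
    linear_combination (-(2 * π * ξ) ^ 2 : ℂ) * Complex.I_sq
  simp only [Complex.ofReal_zero, mul_zero, Complex.exp_zero, neg_div_neg_eq]
  rw [div_add_div _ _ ha0 hb0, hab, Complex.ofReal_div]
  congr 1
  push_cast [a, b]
  ring

lemma integral_exp_mul_div_sq_add_sq {l : ℝ} (hl : 0 < l) (t : ℝ) :
    ∫ p : ℝ, Complex.exp (-(Complex.I * t * p)) * ((l / (l ^ 2 + p ^ 2) : ℝ) : ℂ)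
      = π * rexp (-(l * |t|)) := by
  -- Fourier inversion for the even function `g`, followed by the substitution `p = 2πξ`.
  set g : ℝ → ℂ := fun t => (rexp (-(l * |t|)) : ℂ)
  have hg_fourier : 𝓕 g = fun ξ => ((2 * l / (l ^ 2 + (2 * π * ξ) ^ 2) : ℝ) : ℂ) :=
    funext (fourier_exp_neg_mul_abs hl)
  have hg_fourier_int : Integrable (𝓕 g) := by
    have : Integrable (fun ξ : ℝ => 2 * l / (l ^ 2 + (2 * π * ξ) ^ 2)) := by
      simpa only [mul_div_assoc] using
        ((integrable_div_sq_add_sq hl.ne').comp_mul_left' (R := 2 * π)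
          (by positivity)).const_mul 2
    exact hg_fourier ▸ this.ofReal
  have hinv : 𝓕 (𝓕 g) t = g t := by
    rw [← neg_neg t, ← Real.fourierInv_eq_fourier_neg, neg_neg,
      (integrable_exp_neg_mul_abs hl).ofReal.fourierInv_fourier_eq hg_fourier_int (by fun_prop)]
    simp [g]
  set F : ℝ → ℂ := fun p =>
    Complex.exp (-(Complex.I * t * p)) * ((l / (l ^ 2 + p ^ 2) : ℝ) : ℂ)
  have hfourier_fourier : 𝓕 (𝓕 g) t = (π : ℂ)⁻¹ * ∫ p, F p := by
    have h2π : 0 < 2 * π := by positivity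
    calc 𝓕 (𝓕 g) t = ∫ v : ℝ, 2 * F (2 * π * v) := by
          rw [Real.fourier_real_eq_integral_exp_smul, hg_fourier]
          congr 1 with v
          simp only [F, smul_eq_mul, Complex.ofReal_div, Complex.ofReal_mul]
          push_cast
          ring_nf
      _ = (π : ℂ)⁻¹ * ∫ p, F p := by
          rw [integral_const_mul, Measure.integral_comp_mul_left, abs_of_pos (inv_pos.2 h2π),
            Complex.real_smul]
          push_cast
          field_simp
  rw [← inv_mul_eq_iff_eq_mul₀ (by exact_mod_cast pi_ne_zero), ← hfourier_fourier, hinv]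

lemma psiFn_nonneg {μ : Measure ℝ} (hμ : ∀ᵐ l ∂μ, 0 ≤ l) (p : ℝ) :
    0 ≤ psiFn μ p :=
  mul_nonneg (by positivity) (integral_nonneg_of_ae (by filter_upwards [hμ] with l hl; positivity))

section Mixture

variable {μ : Measure ℝ} [IsFiniteMeasure μ]

lemma integrable_prod_div_sq_add_sq (hμ : ∀ᵐ l ∂μ, 0 < l) :
    Integrable (fun z : ℝ × ℝ => z.1 / (z.1 ^ 2 + z.2 ^ 2)) (μ.prod volume) := by
  rw [integrable_prod_iff (by fun_prop : Measurable _).aestronglyMeasurable]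
  constructor
  · filter_upwards [hμ] with l hl using integrable_div_sq_add_sq hl.ne'
  · refine (integrable_const π).congr ?_
    filter_upwards [hμ] with l hl
    rw [← integral_univ_div_sq_add_sq hl]
    congr 1 with p
    exact (Real.norm_of_nonneg (by positivity)).symm

lemma integrable_psiFn (hμ : ∀ᵐ l ∂μ, 0 < l) : Integrable (psiFn μ) :=
  (integrable_prod_div_sq_add_sq hμ).integral_prod_right.const_mul _

lemma integral_psiFn (hμ : ∀ᵐ l ∂μ, 0 < l) : ∫ p, psiFn μ p = μ.real univ := by
  have hswap := integral_integral_swap (f := fun l p : ℝ => l / (l ^ 2 + p ^ 2))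
    (integrable_prod_div_sq_add_sq hμ)
  simp only [psiFn]
  rw [integral_const_mul, ← hswap,
    integral_congr_ae (hμ.mono fun l hl => integral_univ_div_sq_add_sq hl), integral_const,
    smul_eq_mul]
  field_simp

lemma integral_exp_mul_psiFn (hμ : ∀ᵐ l ∂μ, 0 < l) (t : ℝ) :
    ∫ p : ℝ, Complex.exp (-(Complex.I * t * p)) * (psiFn μ p : ℂ)
      = ((∫ l, rexp (-(l * |t|)) ∂μ : ℝ) : ℂ) := by
  set G : ℝ → ℝ → ℂ := fun l p =>
    Complex.exp (-(Complex.I * t * p)) * ((l / (l ^ 2 + p ^ 2) : ℝ) : ℂ)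
  have hG : Integrable (Function.uncurry G) (μ.prod volume) :=
    (integrable_prod_div_sq_add_sq hμ).ofReal.bdd_mul (c := 1) (by fun_prop)
      (.of_forall fun z => by simp [Complex.norm_exp])
  calc ∫ p : ℝ, Complex.exp (-(Complex.I * t * p)) * (psiFn μ p : ℂ)
      = ∫ p : ℝ, (π : ℂ)⁻¹ * ∫ l, G l p ∂μ := by
        congr 1 with p
        rw [psiFn, Complex.ofReal_mul, ← integral_complex_ofReal, ← integral_const_mul,
          ← integral_const_mul, ← integral_const_mul]
        congr 1 with l
        simp only [G]
        push_cast
        ring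
    _ = (π : ℂ)⁻¹ * ∫ l, (∫ p : ℝ, G l p) ∂μ := by
        rw [integral_const_mul, integral_integral_swap hG]
    _ = (π : ℂ)⁻¹ * ∫ l, (π : ℂ) * rexp (-(l * |t|)) ∂μ := by
        rw [integral_congr_ae (hμ.mono fun l hl => integral_exp_mul_div_sq_add_sq hl t)]
    _ = _ := by
        rw [integral_const_mul, integral_complex_ofReal,
          inv_mul_cancel_left₀ (by exact_mod_cast pi_ne_zero)]

end Mixture

/-- **`ψ_μ` is integrable with `‖ψ_μ‖₁ = μ((0,∞))` and Fourier transform `φ_μ`.**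
Let `μ` be a finite Borel measure on `(0,∞)`.  Then `ψ_μ ∈ L¹(ℝ,ℂ)`,
`∫ |ψ_μ(p)| dp = μ((0,∞))`, and for every `t ∈ ℝ`,
`∫ e^{-itp} ψ_μ(p) dp = φ_μ(t) = ∫ e^{-λ|t|} dμ(λ)`. -/
theorem psi_integrable_and_fourier (μ : Measure ℝ) [IsFiniteMeasure μ]
    (hsupp : μ {x : ℝ | x ≤ 0} = 0) :
    Integrable (psiFn μ) (volume : Measure ℝ) ∧
    (∫ p : ℝ, |psiFn μ p| = (μ (Set.Ioi (0:ℝ))).toReal) ∧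
    ∀ t : ℝ, (∫ p : ℝ, Complex.exp (-(Complex.I * (t : ℂ) * (p : ℂ))) * (psiFn μ p : ℂ))
      = ((∫ l : ℝ, Real.exp (-(l * |t|)) ∂μ : ℝ) : ℂ) := by
  have hμ : ∀ᵐ l ∂μ, 0 < l := by simpa [ae_iff] using hsupp
  have hIoi : μ (Ioi 0) = μ univ :=
    measure_congr (ae_eq_univ.2 (by rw [compl_Ioi]; exact hsupp))
  refine ⟨integrable_psiFn hμ, ?_, integral_exp_mul_psiFn hμ⟩
  have hψ_nonneg := psiFn_nonneg (hμ.mono fun _ => le_of_lt)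
  rw [integral_congr_ae (.of_forall fun p => abs_of_nonneg (hψ_nonneg p)), integral_psiFn hμ,
    measureReal_def, hIoi]
end

section
/- Let ν be a nonzero finite Borel measure on [0,∞]. Then ∫_ℝ |log(Ψ_ν(p))|/(1+p²) dp < ∞. -/
open MeasureTheory
open scoped ENNReal

open Set Real

lemma mem_Icc_exp_of_abs_log_le {x M : ℝ} (hx : 0 < x) (h : |log x| ≤ M) :
    x ∈ Icc (exp (-M)) (exp M) :=
  ⟨(le_log_iff_exp_le hx).1 (neg_le_of_abs_le h), (log_le_iff_le_exp hx).1 (le_of_abs_le h)⟩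

lemma abs_log_le_abs_log_add_of_mem_Icc {c x M : ℝ} (hc : 0 < c)
    (hx : x ∈ Icc (c * exp (-M)) (c * exp M)) : |log x| ≤ |log c| + M := by
  have hx₀ : 0 < x := lt_of_lt_of_le (by positivity) hx.1
  have hlow := log_le_log (by positivity) hx.1
  have hup := log_le_log hx₀ hx.2
  rw [log_mul hc.ne' (exp_pos _).ne', log_exp] at hlow hup
  rw [abs_le]
  constructor <;> linarith [le_abs_self (log c), neg_abs_le (log c)]

lemma abs_log_one_add_div_add_le {a t : ℝ} (ha : 0 < a) (ht : 0 ≤ t) :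
    |log ((1 + t) / (a + t))| ≤ |log a| := by
  have hat : 0 < a + t := by positivity
  rcases le_total a 1 with h | h
  · have hq : 1 ≤ (1 + t) / (a + t) := (one_le_div hat).2 (by linarith)
    rw [abs_of_nonneg (log_nonneg hq), abs_of_nonpos (log_nonpos ha.le h), ← log_inv]
    refine log_le_log (by linarith) ?_
    rw [div_le_iff₀ hat, inv_mul_eq_div, le_div_iff₀ ha]
    nlinarith
  · have hq : (1 + t) / (a + t) ≤ 1 := (div_le_one hat).2 (by linarith)
    rw [abs_of_nonpos (log_nonpos (by positivity) hq), abs_of_nonneg (log_nonneg h), neg_le,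
      ← log_inv]
    refine log_le_log (by positivity) ?_
    rw [le_div_iff₀ hat, inv_mul_eq_div, div_le_iff₀ ha]
    nlinarith

lemma integral_mem_Icc_of_forall_mem_Icc {α : Type*} [MeasurableSpace α] {μ : Measure α}
    [IsFiniteMeasure μ] {f : α → ℝ} {a b : ℝ} (hf : AEStronglyMeasurable f μ)
    (h : ∀ x, f x ∈ Icc a b) : ∫ x, f x ∂μ ∈ Icc (μ.real univ * a) (μ.real univ * b) := by
  have hint : Integrable f μ :=
    (integrable_const (max |a| |b|)).mono' hf
      (ae_of_all _ fun x => abs_le_max_abs_abs (h x).1 (h x).2)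
  constructor
  · calc μ.real univ * a = ∫ _, a ∂μ := by rw [integral_const, smul_eq_mul]
      _ ≤ ∫ x, f x ∂μ := integral_mono (integrable_const a) hint fun x => (h x).1
  · calc ∫ x, f x ∂μ ≤ ∫ _, b ∂μ := integral_mono hint (integrable_const b) fun x => (h x).2
      _ = μ.real univ * b := by rw [integral_const, smul_eq_mul]

noncomputable def psiKernel (p : ℝ) (l : ℝ≥0∞) : ℝ :=
  if l = ∞ then 1 else (1 + l.toReal ^ 2) / (p ^ 2 + l.toReal ^ 2)

lemma Psi_eq_integral_psiKernel (ν : Measure ℝ≥0∞) (p : ℝ) :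
    Psi ν p = (1 / π) * ∫ l, psiKernel p l ∂ν := rfl

lemma measurable_psiKernel (p : ℝ) : Measurable (psiKernel p) :=
  Measurable.ite (measurableSet_singleton ∞) measurable_const (by fun_prop)

lemma psiKernel_mem_Icc {p : ℝ} (hp : p ≠ 0) (l : ℝ≥0∞) :
    psiKernel p l ∈ Icc (exp (-|log (p ^ 2)|)) (exp |log (p ^ 2)|) := by
  by_cases hl : l = ∞
  · simp [psiKernel, hl]
  · have hp2 : 0 < p ^ 2 := by positivity
    rw [psiKernel, if_neg hl]
    exact mem_Icc_exp_of_abs_log_le (by positivity)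
      (abs_log_one_add_div_add_le hp2 (sq_nonneg _))

lemma abs_log_Psi_le (ν : Measure ℝ≥0∞) [IsFiniteMeasure ν] [NeZero ν] {p : ℝ} (hp : p ≠ 0) :
    |log (Psi ν p)| ≤ |log (ν.real univ / π)| + |log (p ^ 2)| := by
  refine abs_log_le_abs_log_add_of_mem_Icc (div_pos measureReal_univ_pos pi_pos) ?_
  obtain ⟨hlow, hup⟩ := integral_mem_Icc_of_forall_mem_Icc
    (measurable_psiKernel p).aestronglyMeasurable (μ := ν) (psiKernel_mem_Icc hp)
  rw [Psi_eq_integral_psiKernel]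
  constructor
  · calc ν.real univ / π * exp (-|log (p ^ 2)|)
          = 1 / π * (ν.real univ * exp (-|log (p ^ 2)|)) := by ring
      _ ≤ _ := by gcongr
  · calc 1 / π * ∫ l, psiKernel p l ∂ν ≤ 1 / π * (ν.real univ * exp |log (p ^ 2)|) := by gcongr
      _ = ν.real univ / π * exp |log (p ^ 2)| := by ring

lemma abs_log_sq_div_one_add_sq_le_rpow {p : ℝ} (hp : 1 ≤ p ^ 2) :
    |log (p ^ 2)| / (1 + p ^ 2) ≤ 4 * (1 + p ^ 2) ^ (-(3 / 4 : ℝ)) := by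
  have hx : 0 < 1 + p ^ 2 := by positivity
  have hlog : |log (p ^ 2)| ≤ 4 * (1 + p ^ 2) ^ (1 / 4 : ℝ) := by
    rw [abs_of_nonneg (log_nonneg hp)]
    calc log (p ^ 2) ≤ log (1 + p ^ 2) := log_le_log (by positivity) (by linarith)
      _ ≤ (1 + p ^ 2) ^ (1 / 4 : ℝ) / (1 / 4) := log_le_rpow_div hx.le (by norm_num)
      _ = 4 * (1 + p ^ 2) ^ (1 / 4 : ℝ) := by ring
  rw [show -(3 / 4 : ℝ) = 1 / 4 - 1 by norm_num, rpow_sub_one hx.ne', mul_div_assoc']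
  gcongr

lemma integrable_abs_log_sq_div_one_add_sq :
    Integrable fun p : ℝ => |log (p ^ 2)| / (1 + p ^ 2) := by
  set g : ℝ → ℝ := fun p => |log (p ^ 2)| / (1 + p ^ 2)
  have hg : AEStronglyMeasurable g := (by fun_prop : Measurable g).aestronglyMeasurable
  have hnear : IntegrableOn g (Icc (-1) 1) := by
    have hlog : IntegrableOn log (Icc (-1 : ℝ) 1) :=
      (intervalIntegrable_iff_integrableOn_Icc_of_le (by norm_num)).1
        intervalIntegral.intervalIntegrable_log'
    refine (hlog.norm.const_mul 2).mono' hg.restrict (ae_of_all _ fun p => ?_)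
    show ‖|log (p ^ 2)| / (1 + p ^ 2)‖ ≤ 2 * ‖log p‖
    rw [Real.norm_of_nonneg (by positivity), norm_eq_abs, log_pow, abs_mul, Nat.cast_ofNat,
      abs_two]
    exact div_le_self (by positivity) (by nlinarith)
  have hfar : IntegrableOn g (Icc (-1) 1)ᶜ := by
    have hdom : Integrable fun p : ℝ => 4 * (1 + ‖p‖ ^ 2) ^ (-(3 / 2 : ℝ) / 2) :=
      (integrable_rpow_neg_one_add_norm_sq (by norm_num)).const_mul 4
    refine hdom.integrableOn.mono' hg.restrict
      ((ae_restrict_iff' measurableSet_Icc.compl).2 (ae_of_all _ fun p hp => ?_))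
    have hp1 : 1 ≤ p ^ 2 := by
      simp only [mem_compl_iff, mem_Icc, not_and_or, not_le] at hp
      rcases hp with hp | hp <;> nlinarith
    show ‖|log (p ^ 2)| / (1 + p ^ 2)‖ ≤ _
    rw [Real.norm_of_nonneg (by positivity), norm_eq_abs, sq_abs,
      show -(3 / 2 : ℝ) / 2 = -(3 / 4) by norm_num]
    exact abs_log_sq_div_one_add_sq_le_rpow hp1
  simpa using hnear.union hfar

/-- **Logarithmic integrability of `Ψ_ν`.**  For every nonzero finite Borel measure `ν`
on `[0,∞]` one has `∫_ℝ |log Ψ_ν(p)| / (1+p²) dp < ∞`. -/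
theorem integral_abs_log_Psi_lt_top (ν : Measure ℝ≥0∞) [IsFiniteMeasure ν] (hν : ν ≠ 0) :
    ∫⁻ p : ℝ, ENNReal.ofReal (|Real.log (Psi ν p)| / (1 + p ^ 2)) < ⊤ := by
  have : NeZero ν := ⟨hν⟩
  set C := |log (ν.real univ / π)|
  have hdom : Integrable fun p : ℝ => (C + |log (p ^ 2)|) / (1 + p ^ 2) := by
    refine ((integrable_inv_one_add_sq.const_mul C).add
      integrable_abs_log_sq_div_one_add_sq).congr (ae_of_all _ fun p => ?_)
    simp only [Pi.add_apply]
    ring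
  refine lt_of_le_of_lt (lintegral_mono_ae ?_) hdom.lintegral_lt_top
  filter_upwards [Measure.ae_ne volume 0] with p hp
  gcongr
  exact abs_log_Psi_le ν hp
end

section
/- For every finite Borel measure ν on [0,∞] there exists a sequence (μ_n) of finite Borel measures on (0,∞) such that (W(μ_n))([0,∞]) = ν([0,∞]) for every n, and W(μ_n) converges to ν in the weak-* topology, i.e. ∫_{[0,∞]} f d(W(μ_n)) → ∫_{[0,∞]} f dν for every continuous function f : [0,∞] → ℂ. -/
/-! A measure `ν'` on `[0,∞]` carried by `(0,∞)` is `W` of its transport to `ℝ` reweighted by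
`(1 + λ²)/λ`, the reciprocal of the weight in `W`; that preimage is finite as soon as `ν'` sits in a
compact subinterval of `(0,∞)`. So push `ν` forward along the clamp onto `[1/(n+1), n+1]`: these
maps preserve total mass and converge pointwise to the identity of `[0,∞]`, hence by dominated
convergence the pushforwards converge weak-* to `ν`. -/

open MeasureTheory Filter Topology
open scoped ENNReal

/-- For a finite Borel measure `μ` on `(0,∞)` (a measure on `ℝ` giving no mass to
`(-∞,0]`), `W(μ)` is the finite Borel measure on `[0,∞]` (modelled by `ℝ≥0∞`)
with `(W(μ))(A) = ∫_{A∩(0,∞)} λ/(1+λ²) dμ(λ)`. -/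
noncomputable def Wmap (μ : Measure ℝ) : Measure ℝ≥0∞ :=
  Measure.map ENNReal.ofReal (μ.withDensity fun x => ENNReal.ofReal (x / (1 + x ^ 2)))

open Set BoundedContinuousFunction

section Convergence

variable {α E ι : Type*} [TopologicalSpace α] [MeasurableSpace α] [OpensMeasurableSpace α]
  [NormedAddCommGroup E] [NormedSpace ℝ E] [SecondCountableTopologyEither α E]
  {l : Filter ι} [l.IsCountablyGenerated]

theorem tendsto_integral_map_of_tendsto_id (ν : Measure α) [IsFiniteMeasure ν] {φ : ι → α → α}
    (hφ_meas : ∀ i, Measurable (φ i)) (hφ : ∀ x, Tendsto (fun i => φ i x) l (𝓝 x)) (f : α →ᵇ E) :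
    Tendsto (fun i => ∫ x, f x ∂(ν.map (φ i))) l (𝓝 (∫ x, f x ∂ν)) := by
  simp_rw [fun i => integral_map (hφ_meas i).aemeasurable
    (f.continuous.aestronglyMeasurable (μ := ν.map (φ i)))]
  refine tendsto_integral_filter_of_dominated_convergence (fun _ => ‖f‖) ?_ ?_
    (integrable_const _) (ae_of_all _ fun x => (f.continuous.tendsto x).comp (hφ x))
  · exact Eventually.of_forall fun i =>
      (f.continuous.stronglyMeasurable.comp_measurable (hφ_meas i)).aestronglyMeasurable
  · exact Eventually.of_forall fun i => ae_of_all _ fun x => f.norm_coe_le_norm _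

end Convergence

theorem Wmap_withDensity_inv_weight (ρ : Measure ℝ) (hρ : ∀ᵐ x ∂ρ, 0 < x) :
    Wmap (ρ.withDensity fun x => ENNReal.ofReal ((1 + x ^ 2) / x)) = ρ.map ENNReal.ofReal := by
  have hw : Measurable fun x : ℝ => ENNReal.ofReal (x / (1 + x ^ 2)) := by fun_prop
  have hw' : Measurable fun x : ℝ => ENNReal.ofReal ((1 + x ^ 2) / x) := by fun_prop
  rw [Wmap, ← withDensity_mul _ hw' hw, withDensity_congr_ae (g := 1), withDensity_one]
  filter_upwards [hρ] with x hx
  rw [Pi.mul_apply, Pi.one_apply, ← ENNReal.ofReal_mul (by positivity),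
    div_mul_div_cancel₀ hx.ne', div_self (by positivity), ENNReal.ofReal_one]

theorem isFiniteMeasure_withDensity_inv_weight (ρ : Measure ℝ) [IsFiniteMeasure ρ] {a b : ℝ}
    (ha : 0 < a) (hρ : ∀ᵐ x ∂ρ, x ∈ Icc a b) :
    IsFiniteMeasure (ρ.withDensity fun x => ENNReal.ofReal ((1 + x ^ 2) / x)) := by
  have hmeas : Measurable fun x : ℝ => (1 + x ^ 2) / x := by fun_prop
  refine isFiniteMeasure_withDensity_ofReal
    (Integrable.of_bound hmeas.aestronglyMeasurable (a⁻¹ + b) ?_).hasFiniteIntegral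
  filter_upwards [hρ] with x ⟨hax, hxb⟩
  have hx : 0 < x := ha.trans_le hax
  rw [Real.norm_of_nonneg (by positivity), add_div, one_div, sq, mul_self_div_self]
  gcongr

noncomputable def WmapRightInv (ν : Measure ℝ≥0∞) : Measure ℝ :=
  (ν.map ENNReal.toReal).withDensity fun x => ENNReal.ofReal ((1 + x ^ 2) / x)

section WmapRightInv

variable {ν : Measure ℝ≥0∞}

theorem ae_pos_map_toReal (hν : ∀ᵐ x ∂ν, x ∈ Ioo 0 ∞) : ∀ᵐ x ∂(ν.map ENNReal.toReal), 0 < x :=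
  (ae_map_iff ENNReal.measurable_toReal.aemeasurable measurableSet_Ioi).2
    (hν.mono fun _ hx => ENNReal.toReal_pos_iff.2 hx)

theorem Wmap_WmapRightInv (hν : ∀ᵐ x ∂ν, x ∈ Ioo 0 ∞) : Wmap (WmapRightInv ν) = ν := by
  rw [WmapRightInv, Wmap_withDensity_inv_weight _ (ae_pos_map_toReal hν),
    Measure.map_map ENNReal.measurable_ofReal ENNReal.measurable_toReal]
  conv_rhs => rw [← Measure.map_id (μ := ν)]
  exact Measure.map_congr (hν.mono fun x hx => ENNReal.ofReal_toReal hx.2.ne)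

theorem WmapRightInv_Iic_zero (hν : ∀ᵐ x ∂ν, x ∈ Ioo 0 ∞) : WmapRightInv ν (Iic 0) = 0 := by
  rw [WmapRightInv, withDensity_apply _ measurableSet_Iic]
  exact setLIntegral_measure_zero _ _
    (measure_mono_null (fun _ hx => not_lt.2 hx) (ae_iff.1 (ae_pos_map_toReal hν)))

theorem isFiniteMeasure_WmapRightInv [IsFiniteMeasure ν] {a b : ℝ≥0∞} (ha : 0 < a) (hab : a ≤ b)
    (hb : b ≠ ∞) (hν : ∀ᵐ x ∂ν, x ∈ Icc a b) : IsFiniteMeasure (WmapRightInv ν) := by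
  refine isFiniteMeasure_withDensity_inv_weight _ (b := b.toReal)
    (ENNReal.toReal_pos ha.ne' (hab.trans_lt hb.lt_top).ne) ?_
  refine (ae_map_iff ENNReal.measurable_toReal.aemeasurable measurableSet_Icc).2 ?_
  filter_upwards [hν] with x ⟨hax, hxb⟩
  exact ⟨ENNReal.toReal_mono (hxb.trans_lt hb.lt_top).ne hax, ENNReal.toReal_mono hb hxb⟩

end WmapRightInv

noncomputable def clampIccInv (a x : ℝ≥0∞) : ℝ≥0∞ := min (max x a⁻¹) a

theorem measurable_clampIccInv (a : ℝ≥0∞) : Measurable (clampIccInv a) :=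
  (measurable_id.max measurable_const).min measurable_const

theorem clampIccInv_mem_Icc {a : ℝ≥0∞} (ha : 1 ≤ a) (x : ℝ≥0∞) : clampIccInv a x ∈ Icc a⁻¹ a :=
  ⟨le_min (le_max_right _ _) ((ENNReal.inv_le_one.2 ha).trans ha), min_le_right _ _⟩

theorem tendsto_clampIccInv {ι : Type*} {l : Filter ι} {a : ι → ℝ≥0∞} (ha : Tendsto a l (𝓝 ∞))
    (x : ℝ≥0∞) : Tendsto (fun i => clampIccInv (a i) x) l (𝓝 x) := by
  have hmax : Tendsto (fun i => max x (a i)⁻¹) l (𝓝 x) := by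
    simpa using tendsto_const_nhds.max (tendsto_inv_iff.2 ha)
  simpa [clampIccInv] using hmax.min ha

/-- **Approximation of measures on `[0,∞]` by measures in the range of `W`.**
For every finite Borel measure `ν` on `[0,∞]` there is a sequence `(μ_n)` of finite
Borel measures on `(0,∞)` with `(W(μ_n))([0,∞]) = ν([0,∞])` for all `n` and
`W(μ_n) → ν` in the weak-* topology, i.e. `∫ f d(W(μ_n)) → ∫ f dν` for every
continuous `f : [0,∞] → ℂ`. -/
theorem Wmap_range_weakstar_dense (ν : Measure ℝ≥0∞) [IsFiniteMeasure ν] :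
    ∃ μ : ℕ → Measure ℝ,
      (∀ n, IsFiniteMeasure (μ n)) ∧
      (∀ n, μ n {x : ℝ | x ≤ 0} = 0) ∧
      (∀ n, Wmap (μ n) Set.univ = ν Set.univ) ∧
      ∀ f : C(ℝ≥0∞, ℂ),
        Tendsto (fun n => ∫ x, f x ∂(Wmap (μ n))) atTop (𝓝 (∫ x, f x ∂ν)) := by
  have hone (n : ℕ) : 1 ≤ (n + 1 : ℝ≥0∞) := le_add_self
  have hIcc (n : ℕ) : ∀ᵐ x ∂ν.map (clampIccInv (n + 1)), x ∈ Icc (n + 1 : ℝ≥0∞)⁻¹ (n + 1) :=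
    (ae_map_iff (measurable_clampIccInv _).aemeasurable measurableSet_Icc).2
      (ae_of_all _ (clampIccInv_mem_Icc (hone n)))
  have hIoo (n : ℕ) : ∀ᵐ x ∂ν.map (clampIccInv (n + 1)), x ∈ Ioo 0 ∞ :=
    (hIcc n).mono fun x hx =>
      ⟨(ENNReal.inv_pos.2 (by simp)).trans_le hx.1, hx.2.trans_lt (by simp)⟩
  refine ⟨fun n => WmapRightInv (ν.map (clampIccInv (n + 1))),
    fun n => isFiniteMeasure_WmapRightInv (ENNReal.inv_pos.2 (by simp))
      ((ENNReal.inv_le_one.2 (hone n)).trans (hone n)) (by simp) (hIcc n),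
    fun n => WmapRightInv_Iic_zero (hIoo n), fun n => ?_, fun f => ?_⟩
  · rw [Wmap_WmapRightInv (hIoo n), Measure.map_apply (measurable_clampIccInv _) .univ,
      preimage_univ]
  · have htop : Tendsto (fun n : ℕ => (n + 1 : ℝ≥0∞)) atTop (𝓝 ∞) := by
      simpa [Function.comp_def] using ENNReal.tendsto_nat_nhds_top.comp (tendsto_add_atTop_nat 1)
    simp_rw [Wmap_WmapRightInv (hIoo _)]
    exact tendsto_integral_map_of_tendsto_id ν (fun _ => measurable_clampIccInv _)
      (tendsto_clampIccInv htop) (mkOfCompact f)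
end

section
/- Let f ∈ L¹_loc(ℝ,ℂ) and let p ∈ ℝ be a Lebesgue point of f. Let (k_n)_{n∈ℕ} be a sequence of non-negative functions, each continuous on [p − 1/√n, p + 1/√n] and continuously differentiable on (p − 1/√n, p + 1/√n), with ∫_{(p−1/√n, p+1/√n)} k_n(x) dx = 1 for all n. Suppose there are constants r, R > 0 such that for every n: max{ k_n(p − 1/√n), k_n(p + 1/√n) } ≤ R·√n, k_n'(x) ≥ 0 for all x ∈ (p − 1/√n, p − 1/n), |k_n'(x)| ≤ r·n² for all x ∈ (p − 1/n, p + 1/n), and k_n'(x) ≤ 0 for all x ∈ (p + 1/n, p + 1/√n). Then lim_{n→∞} ∫_{(p−1/√n, p+1/√n)} k_n(x) f(x) dx = f(p). -/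
/-!
Put `g = ‖f - f p‖`. Since `k_n ≥ 0` has integral `1`, the error is at most `∫ k_n g`, and the
Lebesgue point gives `∫_{p-t}^{p+t} g ≤ η t` for all small `t`. Split `(p - 1/√n, p + 1/√n)` at
`p ± 1/n`. In the middle, `k_n` takes a value `≤ n` (its average over an interval of length
`1/n` on either side of `p` is at most `n`) and is `r n²`-Lipschitz, so `k_n ≤ (1 + r) n` there,
and the middle contributes `O(η)`. On a tail, say `(c, d)` with `c = p + 1/n`, `k_n` is
monotone: writing `k_n x = k_n d - ∫_x^d k_n'` and swapping the order of integration gives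
`∫_c^d k_n g = k_n d G d - ∫_c^d k_n' G` with `G t = ∫_c^t g ≤ η (t - p)`; as `k_n' ≤ 0` this
bound can be inserted, and integrating `k_n' (t - p)` by parts bounds the tail by
`η (k_n c (c - p) + ∫ k_n) = O(η)`. The left half is the mirror image of the right one.
-/

open MeasureTheory Filter Topology Set

theorem intervalIntegral_integral_mul_swap {u v : ℝ → ℝ} {a b : ℝ}
    (hu : IntervalIntegrable u volume a b) (hv : IntervalIntegrable v volume a b) :
    ∫ x in a..b, (∫ t in x..b, u t) * v x = ∫ t in a..b, u t * ∫ x in a..t, v x := by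
  have deriv_primitive {w : ℝ → ℝ} (hw : IntervalIntegrable w volume a b) {c : ℝ}
      (hc : c ∈ uIcc a b) : ∀ᵐ x, x ∈ uIoc a b → deriv (fun x => ∫ t in c..x, w t) x = w x := by
    filter_upwards [hw.ae_hasDerivAt_integral] with x hx hxab
    exact (hx (uIoc_subset_uIcc hxab) c hc).deriv
  have hibp := AbsolutelyContinuousOnInterval.integral_mul_deriv_eq_deriv_mul
    (hv.absolutelyContinuousOnInterval_intervalIntegral left_mem_uIcc)
    (hu.absolutelyContinuousOnInterval_intervalIntegral right_mem_uIcc)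
  rw [intervalIntegral.integral_congr_ae ((deriv_primitive hu right_mem_uIcc).mono
      fun x hx hxab => congrArg _ (hx hxab)),
    intervalIntegral.integral_congr_ae ((deriv_primitive hv left_mem_uIcc).mono
      fun x hx hxab => congrArg (· * _) (hx hxab))] at hibp
  simp only [intervalIntegral.integral_same, mul_zero, zero_mul, sub_zero, zero_sub] at hibp
  simp_rw [intervalIntegral.integral_symm _ b, mul_neg, intervalIntegral.integral_neg,
    neg_neg] at hibp
  simp_rw [mul_comm (u _), hibp, mul_comm]

theorem intervalIntegral_mul_le_of_deriv_nonpos {k k' g : ℝ → ℝ} {p c d η : ℝ} (hcd : c < d)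
    (hk : ContinuousOn k (Icc c d)) (hk' : ∀ x ∈ Ioo c d, HasDerivAt k (k' x) x)
    (hk'_nonpos : ∀ x ∈ Ioo c d, k' x ≤ 0) (hkd : 0 ≤ k d)
    (hg : IntervalIntegrable g volume c d)
    (hgη : ∀ t ∈ Ioc c d, ∫ x in c..t, g x ≤ η * (t - p)) :
    ∫ x in c..d, k x * g x ≤ η * (k c * (c - p) + ∫ x in c..d, k x) := by
  rw [← uIcc_of_le hcd.le] at hk
  have hIoo : Ioo (min c d) (max c d) = Ioo c d := by
    rw [min_eq_left hcd.le, max_eq_right hcd.le]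
  have hk'_int : IntervalIntegrable k' volume c d := by
    simpa using (intervalIntegral.intervalIntegrable_deriv_of_nonneg (g' := -k') hk.neg
      (fun x hx => (hk' x (hIoo ▸ hx)).neg)
      (fun x hx => neg_nonneg.2 (hk'_nonpos x (hIoo ▸ hx)))).neg
  have hftc : ∀ x ∈ uIcc c d, k x = k d - ∫ t in x..d, k' t := by
    intro x hx
    rw [uIcc_of_le hcd.le] at hx hk
    rw [intervalIntegral.integral_eq_sub_of_hasDerivAt_of_le hx.2
      (hk.mono (Icc_subset_Icc_left hx.1)) (fun y hy => hk' y ⟨hx.1.trans_lt hy.1, hy.2⟩)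
      (hk'_int.mono_set (uIcc_subset_uIcc (Icc_subset_uIcc ⟨hx.1, hx.2⟩) right_mem_uIcc))]
    ring
  have hibp : ∫ t in c..d, k' t * (t - p) = k d * (d - p) - k c * (c - p) - ∫ x in c..d, k x := by
    have := intervalIntegral.integral_mul_deriv_eq_deriv_mul_of_hasDerivAt (u := fun t => t - p)
      (u' := fun _ => 1) (continuous_sub_right p).continuousOn hk
      (fun x _ => (hasDerivAt_id x).sub_const p) (hIoo ▸ hk') intervalIntegrable_const hk'_int
    simp only [one_mul] at this
    simp_rw [mul_comm (k' _), this]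
    ring
  have htail_cont : ContinuousOn (fun x => ∫ t in x..d, k' t) (uIcc c d) :=
    (continuousOn_const.sub hk : ContinuousOn (fun x => k d - k x) _).congr fun x hx => by
      rw [Pi.sub_apply, hftc x hx]; ring
  calc ∫ x in c..d, k x * g x = ∫ x in c..d, (k d - ∫ t in x..d, k' t) * g x :=
        intervalIntegral.integral_congr fun x hx => by rw [← hftc x hx]
    _ = k d * (∫ x in c..d, g x) - ∫ t in c..d, k' t * ∫ x in c..t, g x := by
        simp_rw [sub_mul]
        rw [intervalIntegral.integral_sub (hg.const_mul _) (hg.continuousOn_mul htail_cont),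
          intervalIntegral.integral_const_mul, intervalIntegral_integral_mul_swap hk'_int hg]
    _ ≤ k d * (η * (d - p)) - ∫ t in c..d, k' t * (η * (t - p)) := by
        refine sub_le_sub (mul_le_mul_of_nonneg_left (hgη d ⟨hcd, le_rfl⟩) hkd) ?_
        exact intervalIntegral.integral_mono_on_of_le_Ioo hcd.le
          (hk'_int.mul_continuousOn (continuousOn_const.mul (continuous_sub_right p).continuousOn))
          (hk'_int.mul_continuousOn
            (intervalIntegral.continuousOn_primitive_interval' hg left_mem_uIcc))
          fun t ht => mul_le_mul_of_nonpos_left (hgη t ⟨ht.1, ht.2.le⟩) (hk'_nonpos t ht)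
    _ = η * (k c * (c - p) + ∫ x in c..d, k x) := by
        simp_rw [mul_left_comm _ η, intervalIntegral.integral_const_mul, hibp]
        ring

theorem le_of_intervalIntegral_le_of_abs_deriv_le {k k' : ℝ → ℝ} {a b A L : ℝ} (hab : a < b)
    (hk : ContinuousOn k (Icc a b)) (hk' : ∀ x ∈ Ioo a b, HasDerivAt k (k' x) x)
    (hL : ∀ x ∈ Ioo a b, |k' x| ≤ L) (hA : ∫ x in a..b, k x ≤ A) :
    ∀ x ∈ Icc a b, k x ≤ A / (b - a) + L * (b - a) := by
  obtain ⟨x₀, hx₀, hkx₀⟩ := exists_eq_interval_average hab.ne (by rwa [uIcc_of_le hab.le])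
  rw [uIoo_of_le hab.le] at hx₀
  rw [interval_average_eq_div] at hkx₀
  have hkx₀_le : k x₀ ≤ A / (b - a) := hkx₀ ▸ div_le_div_of_nonneg_right hA (sub_pos.2 hab).le
  have hL_nonneg : 0 ≤ L := (abs_nonneg _).trans (hL x₀ hx₀)
  have hIoo : ∀ x ∈ Ioo a b, k x ≤ A / (b - a) + L * (b - a) := by
    intro x hx
    have hlip := Convex.norm_image_sub_le_of_norm_hasDerivWithin_le
      (fun y hy => (hk' y hy).hasDerivWithinAt) hL (convex_Ioo a b) hx₀ hx
    rw [Real.norm_eq_abs, Real.norm_eq_abs] at hlip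
    have hdist : |x - x₀| ≤ b - a :=
      abs_sub_le_iff.2 ⟨by linarith [hx.2, hx₀.1], by linarith [hx.1, hx₀.2]⟩
    calc k x ≤ k x₀ + |k x - k x₀| := by linarith [le_abs_self (k x - k x₀)]
      _ ≤ A / (b - a) + L * (b - a) := by gcongr; exact hlip.trans (by gcongr)
  intro x hx
  rw [← closure_Ioo hab.ne] at hx hk
  exact le_on_closure hIoo hk continuousOn_const hx

theorem intervalIntegral_mul_le_of_peak_right {k k' g : ℝ → ℝ} {p m d L η : ℝ} (hm : 0 < m)
    (hmd : p + m < d) (hk0 : ∀ x ∈ Icc p d, 0 ≤ k x) (hk : ContinuousOn k (Icc p d))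
    (hk' : ∀ x ∈ Ioo p d, HasDerivAt k (k' x) x) (hk1 : ∫ x in p..d, k x ≤ 1)
    (hmid : ∀ x ∈ Ioo p (p + m), |k' x| ≤ L) (hdecr : ∀ x ∈ Ioo (p + m) d, k' x ≤ 0)
    (hg0 : ∀ x, 0 ≤ g x) (hg : IntervalIntegrable g volume p d) (hη : 0 ≤ η)
    (hgη : ∀ t ∈ Ioc p d, ∫ x in p..t, g x ≤ η * (t - p)) :
    ∫ x in p..d, k x * g x ≤ (3 + 2 * L * m ^ 2) * η := by
  set c := p + m
  have hpc : p < c := lt_add_of_pos_right p hm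
  have hpd : p ≤ d := hpc.le.trans hmd.le
  have hp : p ∈ Icc p d := left_mem_Icc.2 hpd
  have hc : c ∈ Icc p d := ⟨hpc.le, hmd.le⟩
  have hd : d ∈ Icc p d := right_mem_Icc.2 hpd
  have restrict {f : ℝ → ℝ} (hf : IntervalIntegrable f volume p d) {u v : ℝ} (hu : u ∈ Icc p d)
      (hv : v ∈ Icc p d) : IntervalIntegrable f volume u v :=
    hf.mono_set (uIcc_subset_uIcc (Icc_subset_uIcc hu) (Icc_subset_uIcc hv))
  have hk_int : IntervalIntegrable k volume p d := hk.intervalIntegrable_of_Icc hpd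
  have hkg_int : IntervalIntegrable (fun x => k x * g x) volume p d :=
    hg.continuousOn_mul (by rwa [uIcc_of_le hpd])
  rw [← intervalIntegral.integral_add_adjacent_intervals (restrict hk_int hp hc)
    (restrict hk_int hc hd)] at hk1
  have hk1_left : 0 ≤ ∫ x in p..c, k x :=
    intervalIntegral.integral_nonneg hpc.le fun x hx => hk0 x ⟨hx.1, hx.2.trans hmd.le⟩
  have hk1_right : 0 ≤ ∫ x in c..d, k x :=
    intervalIntegral.integral_nonneg hmd.le fun x hx => hk0 x ⟨hpc.le.trans hx.1, hx.2⟩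
  have hM : ∀ x ∈ Icc p c, k x ≤ 1 / m + L * m := by
    simpa [c] using le_of_intervalIntegral_le_of_abs_deriv_le hpc
      (hk.mono (Icc_subset_Icc_right hmd.le)) (fun x hx => hk' x ⟨hx.1, hx.2.trans hmd⟩) hmid
      (A := 1) (by linarith)
  have hM_nonneg : 0 ≤ 1 / m + L * m := (hk0 p hp).trans (hM p ⟨le_rfl, hpc.le⟩)
  have hmiddle : ∫ x in p..c, k x * g x ≤ (1 + L * m ^ 2) * η :=
    calc ∫ x in p..c, k x * g x ≤ ∫ x in p..c, (1 / m + L * m) * g x :=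
          intervalIntegral.integral_mono_on hpc.le (restrict hkg_int hp hc)
            ((restrict hg hp hc).const_mul _)
            fun x hx => mul_le_mul_of_nonneg_right (hM x hx) (hg0 x)
      _ ≤ (1 / m + L * m) * (η * (c - p)) := by
          rw [intervalIntegral.integral_const_mul]
          exact mul_le_mul_of_nonneg_left (hgη c ⟨hpc, hmd.le⟩) hM_nonneg
      _ = (1 + L * m ^ 2) * η := by simp only [c]; field_simp; ring
  have hgη_tail : ∀ t ∈ Ioc c d, ∫ x in c..t, g x ≤ η * (t - p) := by
    intro t ht
    have := hgη t ⟨hpc.trans ht.1, ht.2⟩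
    rw [← intervalIntegral.integral_add_adjacent_intervals (restrict hg hp hc)
      (restrict hg hc ⟨hpc.le.trans ht.1.le, ht.2⟩)] at this
    linarith [intervalIntegral.integral_nonneg (μ := volume) hpc.le fun x _ => hg0 x]
  have htail : ∫ x in c..d, k x * g x ≤ (2 + L * m ^ 2) * η :=
    calc ∫ x in c..d, k x * g x ≤ η * (k c * (c - p) + ∫ x in c..d, k x) :=
          intervalIntegral_mul_le_of_deriv_nonpos hmd (hk.mono (Icc_subset_Icc_left hpc.le))
            (fun x hx => hk' x ⟨hpc.trans hx.1, hx.2⟩) hdecr (hk0 d hd) (restrict hg hc hd)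
            hgη_tail
      _ ≤ η * ((1 / m + L * m) * m + 1) := by
          gcongr
          · exact hM c ⟨hpc.le, le_rfl⟩
          · simp [c]
          · linarith
      _ = (2 + L * m ^ 2) * η := by field_simp; ring
  rw [← intervalIntegral.integral_add_adjacent_intervals (restrict hkg_int hp hc)
    (restrict hkg_int hc hd)]
  linarith

theorem intervalIntegral_mul_le_of_peak_left {k k' g : ℝ → ℝ} {p m a L η : ℝ} (hm : 0 < m)
    (ham : a < p - m) (hk0 : ∀ x ∈ Icc a p, 0 ≤ k x) (hk : ContinuousOn k (Icc a p))
    (hk' : ∀ x ∈ Ioo a p, HasDerivAt k (k' x) x) (hk1 : ∫ x in a..p, k x ≤ 1)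
    (hincr : ∀ x ∈ Ioo a (p - m), 0 ≤ k' x) (hmid : ∀ x ∈ Ioo (p - m) p, |k' x| ≤ L)
    (hg0 : ∀ x, 0 ≤ g x) (hg : IntervalIntegrable g volume a p) (hη : 0 ≤ η)
    (hgη : ∀ t ∈ Ico a p, ∫ x in t..p, g x ≤ η * (p - t)) :
    ∫ x in a..p, k x * g x ≤ (3 + 2 * L * m ^ 2) * η := by
  have reflected := intervalIntegral_mul_le_of_peak_right (k := fun x => k (-x))
    (k' := fun x => -k' (-x)) (g := fun x => g (-x)) (p := -p) (d := -a) hm (by linarith)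
    (fun x hx => hk0 (-x) (neg_mem_Icc_iff.2 hx))
    (hk.comp continuousOn_neg fun x hx => neg_mem_Icc_iff.2 hx)
    (fun x hx => by
      simpa [Function.comp_def] using (hk' (-x) (neg_mem_Ioo_iff.2 hx)).comp x (hasDerivAt_neg x))
    (by simpa [intervalIntegral.integral_comp_neg] using hk1)
    (fun x hx => by simpa using hmid (-x) ⟨by linarith [hx.2], by linarith [hx.1]⟩)
    (fun x hx => by simpa using hincr (-x) ⟨by linarith [hx.2], by linarith [hx.1]⟩)
    (fun x => hg0 (-x)) ((IntervalIntegrable.iff_comp_neg (by simp)).1 hg).symm hη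
    (fun t ht => by
      rw [intervalIntegral.integral_comp_neg, neg_neg, sub_neg_eq_add, add_comm]
      simpa using hgη (-t) (neg_mem_Ico_iff.2 (by simpa using ht)))
  have hcomp := intervalIntegral.integral_comp_neg (fun x => k x * g x) (a := -p) (b := -a)
  simp only [neg_neg] at hcomp
  rwa [hcomp] at reflected

theorem intervalIntegral_le_setIntegral_Ioo {g : ℝ → ℝ} {a b u v : ℝ} (hg0 : ∀ x, 0 ≤ g x)
    (hg : IntegrableOn g (Ioo a b)) (hau : a ≤ u) (huv : u ≤ v) (hvb : v ≤ b) :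
    ∫ x in u..v, g x ≤ ∫ x in Ioo a b, g x := by
  rw [intervalIntegral.integral_of_le huv, integral_Ioc_eq_integral_Ioo]
  exact setIntegral_mono_set hg (ae_of_all _ fun x => hg0 x) (Ioo_subset_Ioo hau hvb).eventuallyLE

theorem setIntegral_mul_le_of_peak {k k' g : ℝ → ℝ} {p s m L η : ℝ} (hm : 0 < m) (hms : m < s)
    (hk0 : ∀ x ∈ Icc (p - s) (p + s), 0 ≤ k x) (hk : ContinuousOn k (Icc (p - s) (p + s)))
    (hk' : ∀ x ∈ Ioo (p - s) (p + s), HasDerivAt k (k' x) x)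
    (hk1 : ∫ x in Ioo (p - s) (p + s), k x ≤ 1)
    (hincr : ∀ x ∈ Ioo (p - s) (p - m), 0 ≤ k' x) (hmid : ∀ x ∈ Ioo (p - m) (p + m), |k' x| ≤ L)
    (hdecr : ∀ x ∈ Ioo (p + m) (p + s), k' x ≤ 0)
    (hg0 : ∀ x, 0 ≤ g x) (hg : IntervalIntegrable g volume (p - s) (p + s)) (hη : 0 ≤ η)
    (hgη : ∀ t ∈ Ioc 0 s, ∫ x in Ioo (p - t) (p + t), g x ≤ η * t) :
    ∫ x in Ioo (p - s) (p + s), k x * g x ≤ (6 + 4 * L * m ^ 2) * η := by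
  have hps : p - s ≤ p := by linarith
  have hsp : p ≤ p + s := by linarith
  have hp : p ∈ Icc (p - s) (p + s) := ⟨hps, hsp⟩
  have hl : p - s ∈ Icc (p - s) (p + s) := left_mem_Icc.2 (hps.trans hsp)
  have hr : p + s ∈ Icc (p - s) (p + s) := right_mem_Icc.2 (hps.trans hsp)
  have restrict {f : ℝ → ℝ} (hf : IntervalIntegrable f volume (p - s) (p + s)) {u v : ℝ}
      (hu : u ∈ Icc (p - s) (p + s)) (hv : v ∈ Icc (p - s) (p + s)) :
      IntervalIntegrable f volume u v :=
    hf.mono_set (uIcc_subset_uIcc (Icc_subset_uIcc hu) (Icc_subset_uIcc hv))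
  have split {F : ℝ → ℝ} (hF : IntervalIntegrable F volume (p - s) (p + s)) :
      ∫ x in Ioo (p - s) (p + s), F x = (∫ x in (p - s)..p, F x) + ∫ x in p..(p + s), F x := by
    rw [intervalIntegral.integral_add_adjacent_intervals (restrict hF hl hp) (restrict hF hp hr),
      intervalIntegral.integral_of_le (hps.trans hsp), integral_Ioc_eq_integral_Ioo]
  have hgη_sub (t : ℝ) (ht : t ∈ Ioc 0 s) {u v : ℝ} (hu : p - t ≤ u) (huv : u ≤ v)
      (hv : v ≤ p + t) : ∫ x in u..v, g x ≤ η * t :=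
    (intervalIntegral_le_setIntegral_Ioo hg0
      (((intervalIntegrable_iff_integrableOn_Ioo_of_le (hps.trans hsp)).1 hg).mono_set
        (Ioo_subset_Ioo (by linarith [ht.2]) (by linarith [ht.2]))) hu huv hv).trans (hgη t ht)
  rw [split (hk.intervalIntegrable_of_Icc (hps.trans hsp))] at hk1
  have hk1_left : 0 ≤ ∫ x in (p - s)..p, k x :=
    intervalIntegral.integral_nonneg hps fun x hx => hk0 x ⟨hx.1, hx.2.trans hsp⟩
  have hk1_right : 0 ≤ ∫ x in p..(p + s), k x :=
    intervalIntegral.integral_nonneg hsp fun x hx => hk0 x ⟨hps.trans hx.1, hx.2⟩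
  have hleft := intervalIntegral_mul_le_of_peak_left hm (by linarith)
    (fun x hx => hk0 x ⟨hx.1, hx.2.trans hsp⟩) (hk.mono (Icc_subset_Icc_right hsp))
    (fun x hx => hk' x ⟨hx.1, hx.2.trans_le hsp⟩) (by linarith) hincr
    (fun x hx => hmid x ⟨hx.1, by linarith [hx.2]⟩) hg0 (restrict hg hl hp) hη
    fun t ht => hgη_sub (p - t) ⟨by linarith [ht.2], by linarith [ht.1]⟩ (by linarith) ht.2.le
      (by linarith [ht.2])
  have hright := intervalIntegral_mul_le_of_peak_right hm (by linarith)
    (fun x hx => hk0 x ⟨hps.trans hx.1, hx.2⟩) (hk.mono (Icc_subset_Icc_left hps))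
    (fun x hx => hk' x ⟨hps.trans_lt hx.1, hx.2⟩) (by linarith)
    (fun x hx => hmid x ⟨by linarith [hx.1], hx.2⟩) hdecr hg0 (restrict hg hp hr) hη
    fun t ht => hgη_sub (t - p) ⟨by linarith [ht.1], by linarith [ht.2]⟩ (by linarith [ht.1])
      ht.1.le (by linarith [ht.1])
  rw [split (hg.continuousOn_mul (by rwa [uIcc_of_le (hps.trans hsp)]))]
  linarith

theorem exists_pos_forall_le_mul_of_tendsto {F : ℝ → ℝ}
    (hF : Tendsto (fun ε => 1 / (2 * ε) * F ε) (𝓝[>] 0) (𝓝 0)) {η : ℝ} (hη : 0 < η) :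
    ∃ δ > 0, ∀ t ∈ Ioo 0 δ, F t ≤ η * t := by
  obtain ⟨δ, hδ, hF_lt⟩ :=
    (nhdsGT_basis 0).eventually_iff.1 (hF.eventually (gt_mem_nhds (half_pos hη)))
  refine ⟨δ, hδ, fun t ht => ?_⟩
  have := hF_lt ht
  rw [one_div_mul_eq_div, div_lt_iff₀ (by linarith [ht.1])] at this
  linarith

theorem norm_integral_smul_sub_le {α E : Type*} [MeasurableSpace α] [NormedAddCommGroup E]
    [NormedSpace ℝ E] [CompleteSpace E] {μ : Measure α} {k : α → ℝ} {f : α → E} (c : E)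
    (hk0 : 0 ≤ᵐ[μ] k) (hk : Integrable k μ) (hk1 : ∫ x, k x ∂μ = 1)
    (hkf : Integrable (fun x => k x • f x) μ) :
    ‖(∫ x, k x • f x ∂μ) - c‖ ≤ ∫ x, k x * ‖f x - c‖ ∂μ :=
  calc ‖(∫ x, k x • f x ∂μ) - c‖ = ‖∫ x, k x • (f x - c) ∂μ‖ := by
        simp_rw [smul_sub]
        rw [integral_sub hkf (hk.smul_const c), integral_smul_const, hk1, one_smul]
    _ ≤ ∫ x, ‖k x • (f x - c)‖ ∂μ := norm_integral_le_integral_norm _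
    _ = ∫ x, k x * ‖f x - c‖ ∂μ := integral_congr_ae (hk0.mono fun x hx => by
        dsimp only; rw [norm_smul, Real.norm_of_nonneg hx])

theorem tendsto_zero_of_forall_eventually_le_mul {ι : Type*} {l : Filter ι} {J : ι → ℝ} (C : ℝ)
    (hJ0 : ∀ᶠ i in l, 0 ≤ J i) (hJ : ∀ η > 0, ∀ᶠ i in l, J i ≤ C * η) :
    Tendsto J l (𝓝 0) := by
  refine tendsto_order.2 ⟨fun ε hε => hJ0.mono fun i hi => hε.trans_le hi, fun ε hε => ?_⟩
  filter_upwards [hJ (ε / (|C| + 1)) (by positivity)] with i hi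
  calc J i ≤ |C| * (ε / (|C| + 1)) :=
        hi.trans (mul_le_mul_of_nonneg_right (le_abs_self C) (by positivity))
    _ < ε := by
        rw [mul_div_assoc', div_lt_iff₀ (by positivity)]
        nlinarith [abs_nonneg C]

theorem lebesgue_point_kernel_approx_general (f : ℝ → ℂ)
    (hf : LocallyIntegrable f (volume : Measure ℝ)) (p : ℝ)
    (hleb : Tendsto (fun ε : ℝ => (1 / (2 * ε)) * ∫ x in Set.Ioo (p - ε) (p + ε), ‖f x - f p‖)
      (𝓝[>] 0) (𝓝 0))
    (k k' : ℕ → ℝ → ℝ) (r : ℝ)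
    (hpos : ∀ n : ℕ, 1 ≤ n → ∀ x ∈ Set.Icc (p - 1 / Real.sqrt n) (p + 1 / Real.sqrt n), 0 ≤ k n x)
    (hcont : ∀ n : ℕ, 1 ≤ n → ContinuousOn (k n) (Set.Icc (p - 1 / Real.sqrt n) (p + 1 / Real.sqrt n)))
    (hderiv : ∀ n : ℕ, 1 ≤ n → ∀ x ∈ Set.Ioo (p - 1 / Real.sqrt n) (p + 1 / Real.sqrt n),
      HasDerivAt (k n) (k' n x) x)
    (hint : ∀ n : ℕ, 1 ≤ n →
      (∫ x in Set.Ioo (p - 1 / Real.sqrt n) (p + 1 / Real.sqrt n), k n x) = 1)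
    (hincr : ∀ n : ℕ, 1 ≤ n → ∀ x ∈ Set.Ioo (p - 1 / Real.sqrt n) (p - 1 / n), 0 ≤ k' n x)
    (hmid : ∀ n : ℕ, 1 ≤ n → ∀ x ∈ Set.Ioo (p - 1 / (n : ℝ)) (p + 1 / n), |k' n x| ≤ r * (n : ℝ) ^ 2)
    (hdecr : ∀ n : ℕ, 1 ≤ n → ∀ x ∈ Set.Ioo (p + 1 / (n : ℝ)) (p + 1 / Real.sqrt n), k' n x ≤ 0) :
    Tendsto (fun n : ℕ => ∫ x in Set.Ioo (p - 1 / Real.sqrt n) (p + 1 / Real.sqrt n),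
      (k n x : ℂ) * f x) atTop (𝓝 (f p)) := by
  have hg (u v : ℝ) : IntervalIntegrable (fun x => ‖f x - f p‖) volume u v :=
    IntegrableOn.intervalIntegrable
      ((hf.sub (locallyIntegrable_const (f p))).integrableOn_isCompact isCompact_uIcc).norm
  have hs : Tendsto (fun n : ℕ => 1 / √n) atTop (𝓝 0) := by
    simpa [Function.comp_def] using
      tendsto_inv_atTop_zero.comp (Real.tendsto_sqrt_atTop.comp tendsto_natCast_atTop_atTop)
  have hJ : Tendsto (fun n : ℕ => ∫ x in Ioo (p - 1 / √n) (p + 1 / √n), k n x * ‖f x - f p‖)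
      atTop (𝓝 0) := by
    refine tendsto_zero_of_forall_eventually_le_mul (6 + 4 * r)
      ((eventually_ge_atTop 1).mono fun n hn => setIntegral_nonneg measurableSet_Ioo fun x hx =>
        mul_nonneg (hpos n hn x (Ioo_subset_Icc_self hx)) (norm_nonneg _)) fun η hη => ?_
    obtain ⟨δ, hδ, hgδ⟩ := exists_pos_forall_le_mul_of_tendsto hleb hη
    filter_upwards [eventually_ge_atTop 2, hs.eventually_lt_const hδ] with n hn hnδ
    have hn1 : 1 ≤ n := by omega
    have hm : 1 / (n : ℝ) < 1 / √n := one_div_lt_one_div_of_lt (by positivity)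
      (Real.sqrt_lt_self_iff.2 (by exact_mod_cast hn))
    calc _ ≤ (6 + 4 * (r * n ^ 2) * (1 / n) ^ 2) * η :=
          setIntegral_mul_le_of_peak (by positivity) hm (hpos n hn1) (hcont n hn1) (hderiv n hn1)
            (hint n hn1).le (hincr n hn1) (hmid n hn1) (hdecr n hn1) (fun _ => norm_nonneg _)
            (hg _ _) hη.le fun t ht => hgδ t ⟨ht.1, ht.2.trans_lt hnδ⟩
      _ = (6 + 4 * r) * η := by field_simp
  rw [tendsto_iff_norm_sub_tendsto_zero]
  refine squeeze_zero' (Eventually.of_forall fun n => norm_nonneg _) ?_ hJ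
  filter_upwards [eventually_ge_atTop 1] with n hn
  simp_rw [← Complex.real_smul]
  exact norm_integral_smul_sub_le (f p)
    ((ae_restrict_mem measurableSet_Ioo).mono fun x hx => hpos n hn x (Ioo_subset_Icc_self hx))
    ((hcont n hn).integrableOn_Icc.mono_set Ioo_subset_Icc_self) (hint n hn)
    (((hf.integrableOn_isCompact isCompact_Icc).continuousOn_smul (hcont n hn)
      isCompact_Icc).mono_set Ioo_subset_Icc_self)

/-- **Approximation at Lebesgue points by concentrating kernels.**
Let `f ∈ L¹_loc(ℝ,ℂ)` and let `p` be a Lebesgue point of `f`.  Let `(k_n)` be a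
sequence of non-negative functions, `k_n` continuous on `[p-1/√n, p+1/√n]` and
continuously differentiable (with derivative `k_n'`) on `(p-1/√n, p+1/√n)`, with
`∫_{(p-1/√n,p+1/√n)} k_n = 1`, and suppose there are `r, R > 0` such that for all `n ≥ 1`:
`max(k_n(p-1/√n), k_n(p+1/√n)) ≤ R√n`, `k_n' ≥ 0` on `(p-1/√n, p-1/n)`,
`|k_n'| ≤ r n²` on `(p-1/n, p+1/n)` and `k_n' ≤ 0` on `(p+1/n, p+1/√n)`.
Then `∫_{(p-1/√n,p+1/√n)} k_n f → f(p)`. -/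
theorem lebesgue_point_kernel_approx (f : ℝ → ℂ)
    (hf : LocallyIntegrable f (volume : Measure ℝ)) (p : ℝ)
    (hleb : Tendsto (fun ε : ℝ => (1 / (2 * ε)) * ∫ x in Set.Ioo (p - ε) (p + ε), ‖f x - f p‖)
      (𝓝[>] 0) (𝓝 0))
    (k k' : ℕ → ℝ → ℝ) (r R : ℝ) (hr : 0 < r) (hR : 0 < R)
    (hpos : ∀ n : ℕ, 1 ≤ n → ∀ x ∈ Set.Icc (p - 1 / Real.sqrt n) (p + 1 / Real.sqrt n), 0 ≤ k n x)
    (hcont : ∀ n : ℕ, 1 ≤ n → ContinuousOn (k n) (Set.Icc (p - 1 / Real.sqrt n) (p + 1 / Real.sqrt n)))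
    (hderiv : ∀ n : ℕ, 1 ≤ n → ∀ x ∈ Set.Ioo (p - 1 / Real.sqrt n) (p + 1 / Real.sqrt n),
      HasDerivAt (k n) (k' n x) x)
    (hderivcont : ∀ n : ℕ, 1 ≤ n →
      ContinuousOn (k' n) (Set.Ioo (p - 1 / Real.sqrt n) (p + 1 / Real.sqrt n)))
    (hint : ∀ n : ℕ, 1 ≤ n →
      (∫ x in Set.Ioo (p - 1 / Real.sqrt n) (p + 1 / Real.sqrt n), k n x) = 1)
    (hbound : ∀ n : ℕ, 1 ≤ n →
      max (k n (p - 1 / Real.sqrt n)) (k n (p + 1 / Real.sqrt n)) ≤ R * Real.sqrt n)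
    (hincr : ∀ n : ℕ, 1 ≤ n → ∀ x ∈ Set.Ioo (p - 1 / Real.sqrt n) (p - 1 / n), 0 ≤ k' n x)
    (hmid : ∀ n : ℕ, 1 ≤ n → ∀ x ∈ Set.Ioo (p - 1 / (n : ℝ)) (p + 1 / n), |k' n x| ≤ r * (n : ℝ) ^ 2)
    (hdecr : ∀ n : ℕ, 1 ≤ n → ∀ x ∈ Set.Ioo (p + 1 / (n : ℝ)) (p + 1 / Real.sqrt n), k' n x ≤ 0) :
    Tendsto (fun n : ℕ => ∫ x in Set.Ioo (p - 1 / Real.sqrt n) (p + 1 / Real.sqrt n),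
      (k n x : ℂ) * f x) atTop (𝓝 (f p)) :=
  lebesgue_point_kernel_approx_general f hf p hleb k k' r hpos hcont hderiv hint hincr hmid hdecr
end
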